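/- arXiv:0708.2268 — 4 statements merged into one kernel-verified Lean document; each statement's English description precedes it below -/
import Mathlib

section
/- Let τ < σ be cones in V = Λ ⊗ ℝ with dim τ = dim σ − 1 (τ a proper face of σ). Then the quotient lattice Λ_σ/Λ_τ is isomorphic to ℤ, the image of σ in the one-dimensional space V_σ/V_τ is contained in a unique closed half-line, and there is a unique generator u_{σ/τ} of Λ_σ/Λ_τ lying in this half-line (the primitive normal vector of σ relative to τ). -/
/-!
Write `τ = σ ∩ {c = 0}` for an integral form `c ≥ 0` on `σ`. As `V_τ` is a hyperplane of `V_σ`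
on which `c` vanishes, `V_σ = V_τ ⊕ ℝ u` for every `u ∈ V_σ` with `c u ≠ 0`; hence every linear
form vanishing on `V_τ` is proportional to `c` on `V_σ`, and `V_τ = V_σ ∩ ker c`.
The span of `σ` is the solution space of a rational linear system (the defining equations and
the inequalities that are equalities on all of `σ`), so `c` is nonzero somewhere on `Λ_σ`.
Then `c(Λ_σ)` is a nonzero subgroup of `ℤ`, and any `u ∈ Λ_σ` such that `c u` is its positive
generator is the primitive normal vector: all claims follow by comparing values of `c`.
-/

open scoped BigOperators

namespace TropFan

/-- `V N` is the real vector space `ℝ^N`. -/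
abbrev V (N : ℕ) := Fin N → ℝ

/-- The lattice `ℤ^N ⊆ ℝ^N`, as an additive subgroup. -/
def latticePts (N : ℕ) : AddSubgroup (V N) where
  carrier := {x | ∀ i, ∃ m : ℤ, x i = (m : ℝ)}
  add_mem' := by
    intro a b ha hb i
    obtain ⟨m, hm⟩ := ha i
    obtain ⟨k, hk⟩ := hb i
    exact ⟨m + k, by push_cast [Pi.add_apply]; rw [hm, hk]⟩
  zero_mem' := fun i => ⟨0, by simp⟩
  neg_mem' := by
    intro a ha i
    obtain ⟨m, hm⟩ := ha i
    exact ⟨-m, by push_cast [Pi.neg_apply]; rw [hm]⟩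

/-- Evaluation of the integral linear form with coefficients `c` on `x`. -/
def evalForm {N : ℕ} (c : Fin N → ℤ) (x : V N) : ℝ := ∑ i, (c i : ℝ) * x i

/-- A (rational polyhedral) cone in `ℝ^N`: a subset cut out by finitely many
integral linear equalities and inequalities. -/
def IsCone {N : ℕ} (σ : Set (V N)) : Prop :=
  ∃ (n m : ℕ) (f : Fin n → Fin N → ℤ) (g : Fin m → Fin N → ℤ),
    σ = {x | (∀ i, evalForm (f i) x = 0) ∧ ∀ j, 0 ≤ evalForm (g j) x}

/-- `τ` is a face of `σ` (obtained by turning some defining inequalities into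
equalities; equivalently, cut out on `σ` by an integral supporting form). -/
def IsFace {N : ℕ} (τ σ : Set (V N)) : Prop :=
  IsCone τ ∧ IsCone σ ∧ τ ⊆ σ ∧
    ∃ c : Fin N → ℤ, (∀ x ∈ σ, 0 ≤ evalForm c x) ∧ τ = {x ∈ σ | evalForm c x = 0}

/-- `V_σ`, the linear span of the cone `σ`. -/
def coneSpan {N : ℕ} (σ : Set (V N)) : Submodule ℝ (V N) := Submodule.span ℝ σ

/-- The dimension of a cone. -/
noncomputable def coneDim {N : ℕ} (σ : Set (V N)) : ℕ := Module.finrank ℝ ↥(coneSpan σ)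

/-- `Λ_σ = V_σ ∩ ℤ^N`. -/
def coneLattice {N : ℕ} (σ : Set (V N)) : AddSubgroup (V N) :=
  (coneSpan σ).toAddSubgroup ⊓ latticePts N

/-- `u ∈ Λ_σ` represents the primitive normal vector `u_{σ/τ}` of `σ` relative to
its codimension-one face `τ`: together with `Λ_τ` it generates `Λ_σ`, and it lies
on the `σ`-side of `V_τ`. -/
def IsNormalVector {N : ℕ} (τ σ : Set (V N)) (u : V N) : Prop :=
  u ∈ coneLattice σ ∧
  (∀ x ∈ coneLattice σ, ∃ k : ℤ, x - k • u ∈ coneLattice τ) ∧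
  ∃ g : (V N) →ₗ[ℝ] ℝ, (∀ x ∈ coneSpan τ, g x = 0) ∧ (∀ x ∈ σ, 0 ≤ g x) ∧ 0 < g u

/-- A fan in `ℝ^N`: a finite set of cones, closed under passing to faces, such
that the intersection of any two of its cones is a face of each. -/
structure Fan (N : ℕ) where
  cones : Set (Set (V N))
  finite : cones.Finite
  isCone : ∀ σ ∈ cones, IsCone σ
  faces_mem : ∀ σ ∈ cones, ∀ τ, IsFace τ σ → τ ∈ cones
  inter_face : ∀ σ₁ ∈ cones, ∀ σ₂ ∈ cones, IsFace (σ₁ ∩ σ₂) σ₁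

/-- The support `|X|` of a fan: the union of its cones. -/
def Fan.support {N : ℕ} (X : Fan N) : Set (V N) := ⋃ σ ∈ X.cones, σ

/-- `X^{(k)}`, the set of `k`-dimensional cones of `X`. -/
def Fan.conesOfDim {N : ℕ} (X : Fan N) (k : ℕ) : Set (Set (V N)) :=
  {σ | σ ∈ X.cones ∧ coneDim σ = k}

/-- A fan is pure of dimension `n` if every cone is contained in an
`n`-dimensional cone of the fan. -/
def Fan.IsPure {N : ℕ} (X : Fan N) (n : ℕ) : Prop :=
  ∀ σ ∈ X.cones, ∃ σ', σ' ∈ X.conesOfDim n ∧ σ ⊆ σ'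

/-- The balancing condition for a fan `X` of pure dimension `n` with weights `w`:
for each codimension-one cone `τ` and for each choice of primitive normal vectors
`u σ = u_{σ/τ}`, the weighted sum `Σ_{σ > τ} w(σ) • u_{σ/τ}` vanishes modulo `V_τ`. -/
def IsBalanced {N : ℕ} (X : Fan N) (n : ℕ) (w : Set (V N) → ℤ) : Prop :=
  ∀ τ ∈ X.conesOfDim (n - 1),
    ∀ u : Set (V N) → V N,
      (∀ σ ∈ X.conesOfDim n, IsFace τ σ → τ ≠ σ → IsNormalVector τ σ (u σ)) →
      (∑ᶠ σ ∈ {σ | σ ∈ X.conesOfDim n ∧ IsFace τ σ ∧ τ ≠ σ}, w σ • u σ) ∈ coneSpan τ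

/-- A weighted fan of dimension `n`: a pure `n`-dimensional fan together with
positive integer weights on its `n`-dimensional cones. -/
structure WeightedFan (N n : ℕ) extends Fan N where
  pure : toFan.IsPure n
  weight : Set (V N) → ℤ
  weight_pos : ∀ σ ∈ toFan.conesOfDim n, 0 < weight σ

/-- A tropical fan is a weighted fan satisfying the balancing condition. -/
def WeightedFan.IsTropical {N n : ℕ} (X : WeightedFan N n) : Prop :=
  IsBalanced X.toFan n X.weight

/-- `Y` is a subfan of `X`. -/
def IsSubfan {N : ℕ} (Y X : Fan N) : Prop := ∀ σ ∈ Y.cones, ∃ σ' ∈ X.cones, σ ⊆ σ'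

/-- `σ'` is the inclusion-minimal cone `C_{Y,X}(σ)` of `X` containing `σ`. -/
def IsMinConeOver {N : ℕ} (X : Fan N) (σ σ' : Set (V N)) : Prop :=
  σ' ∈ X.cones ∧ σ ⊆ σ' ∧ ∀ σ'' ∈ X.cones, σ ⊆ σ'' → σ' ⊆ σ''

/-- `(Y, ω_Y)` is a refinement of `(X, ω_X)`. -/
def IsRefinement {N n : ℕ} (Y X : WeightedFan N n) : Prop :=
  IsSubfan Y.toFan X.toFan ∧
  Y.toFan.support = X.toFan.support ∧
  ∀ σ ∈ Y.toFan.conesOfDim n, ∀ σ', IsMinConeOver X.toFan σ σ' → Y.weight σ = X.weight σ'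

/-- A tropical fan is irreducible if there is no (nonempty) tropical fan of the
same dimension whose support is a proper subset of its support. -/
def IsIrreducible {N n : ℕ} (X : WeightedFan N n) : Prop :=
  ¬ ∃ Y : WeightedFan N n, Y.IsTropical ∧ (Y.toFan.conesOfDim n).Nonempty ∧
      Y.toFan.support ⊂ X.toFan.support

/-- A simplicial (rational) cone: the nonnegative span of finitely many linearly
independent lattice vectors. -/
def IsSimplicialCone {N : ℕ} (σ : Set (V N)) : Prop :=
  ∃ (k : ℕ) (v : Fin k → V N), LinearIndependent ℝ v ∧ (∀ i, v i ∈ latticePts N) ∧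
    σ = {x | ∃ c : Fin k → ℝ, (∀ i, 0 ≤ c i) ∧ x = ∑ i, c i • v i}

/-- A marked fan: a pure `n`-dimensional simplicial fan together with a choice
of an integral generator (marking) of each of its edges. -/
structure MarkedFan (N n : ℕ) extends Fan N where
  pure : toFan.IsPure n
  simplicial : ∀ σ ∈ cones, IsSimplicialCone σ
  mark : Set (V N) → V N
  mark_mem : ∀ σ ∈ toFan.conesOfDim 1, mark σ ∈ σ ∧ mark σ ≠ 0 ∧ mark σ ∈ latticePts N

/-- The sublattice `Λ̃_σ ⊆ Λ_σ` generated by the markings of the edges of `σ`. -/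
def MarkedFan.markLattice {N n : ℕ} (X : MarkedFan N n) (σ : Set (V N)) : AddSubgroup (V N) :=
  AddSubgroup.closure (X.mark '' {e | e ∈ X.toFan.conesOfDim 1 ∧ IsFace e σ})

/-- The weight `ω(σ) = |Λ_σ / Λ̃_σ|` of a cone of a marked fan. -/
noncomputable def MarkedFan.weight {N n : ℕ} (X : MarkedFan N n) (σ : Set (V N)) : ℕ :=
  (X.markLattice σ).relIndex (coneLattice σ)

/-- `v = v_{σ/τ}`: `v` is the marking of an edge of `σ` which is not a face of `τ`. -/
def MarkedFan.IsRelMark {N n : ℕ} (X : MarkedFan N n) (σ τ : Set (V N)) (v : V N) : Prop :=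
  ∃ e, e ∈ X.toFan.conesOfDim 1 ∧ IsFace e σ ∧ ¬ IsFace e τ ∧ v = X.mark e

end TropFan

open Module Submodule Filter Topology Matrix

section LinearAlgebra

theorem Submodule.exists_add_smul_eq_of_finrank_eq_succ {K E : Type*} [DivisionRing K]
    [AddCommGroup E] [Module K E] [FiniteDimensional K E] {W' W : Submodule K E} (hle : W' ≤ W)
    (hdim : finrank K W' + 1 = finrank K W) {u : E} (hu : u ∈ W) (hu' : u ∉ W') {x : E}
    (hx : x ∈ W) : ∃ w ∈ W', ∃ t : K, w + t • u = x := by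
  have hsup : W' ⊔ K ∙ u = W :=
    eq_of_le_of_finrank_eq (sup_le hle ((span_singleton_le_iff_mem u W).2 hu))
      ((finrank_sup_span_singleton hu').trans hdim)
  rw [← hsup, mem_sup] at hx
  obtain ⟨w, hw, y, hy, rfl⟩ := hx
  obtain ⟨t, rfl⟩ := mem_span_singleton.1 hy
  exact ⟨w, hw, t, rfl⟩

variable {K E : Type*} [Field K] [AddCommGroup E] [Module K E] [FiniteDimensional K E]
  {W' W : Submodule K E} {φ : E →ₗ[K] K} {u x : E}

theorem LinearMap.apply_mul_eq_of_finrank_eq_succ (hle : W' ≤ W)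
    (hdim : finrank K W' + 1 = finrank K W) (hφ : ∀ y ∈ W', φ y = 0) {g : E →ₗ[K] K}
    (hg : ∀ y ∈ W', g y = 0) (hu : u ∈ W) (hφu : φ u ≠ 0) (hx : x ∈ W) :
    g x * φ u = φ x * g u := by
  obtain ⟨w, hw, t, rfl⟩ :=
    exists_add_smul_eq_of_finrank_eq_succ hle hdim hu (fun h => hφu (hφ u h)) hx
  simp only [map_add, map_smul, hφ w hw, hg w hw, smul_eq_mul, zero_add]
  ring

theorem LinearMap.mem_of_apply_eq_zero_of_finrank_eq_succ (hle : W' ≤ W)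
    (hdim : finrank K W' + 1 = finrank K W) (hφ : ∀ y ∈ W', φ y = 0) (hu : u ∈ W)
    (hφu : φ u ≠ 0) (hx : x ∈ W) (hφx : φ x = 0) : x ∈ W' := by
  obtain ⟨w, hw, t, rfl⟩ :=
    exists_add_smul_eq_of_finrank_eq_succ hle hdim hu (fun h => hφu (hφ u h)) hx
  simp only [map_add, map_smul, hφ w hw, smul_eq_mul, zero_add, mul_eq_zero, hφu,
    or_false] at hφx
  simpa [hφx] using hw

end LinearAlgebra

theorem exists_eq_sum_smul_of_forall_dotProduct_eq_zero {K n ι : Type*} [Field K] [Fintype n]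
    [DecidableEq n] [Fintype ι] (A : ι → n → K) (c : n → K)
    (h : ∀ x, (∀ i, A i ⬝ᵥ x = 0) → c ⬝ᵥ x = 0) : ∃ μ : ι → K, ∑ i, μ i • A i = c := by
  let e := dotProductEquiv K n
  let R : Subspace K (Dual K (n → K)) := span K (Set.range (e ∘ A))
  have hc : e c ∈ R.dualCoannihilator.dualAnnihilator := by
    rw [mem_dualAnnihilator]
    intro x hx
    rw [mem_dualCoannihilator] at hx
    exact h x fun i => hx _ (subset_span ⟨i, rfl⟩)
  rw [Subspace.dualCoannihilator_dualAnnihilator_eq, mem_span_range_iff_exists_fun] at hc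
  obtain ⟨μ, hμ⟩ := hc
  exact ⟨μ, e.injective (by simpa [map_sum, map_smul] using hμ)⟩

theorem AddSubgroup.exists_forall_apply_eq_intCast_mul {G : Type*} [AddCommGroup G]
    (H : AddSubgroup G) (φ : G →+ ℝ) (hint : ∀ x ∈ H, ∃ m : ℤ, φ x = m)
    (hne : ∃ x ∈ H, φ x ≠ 0) : ∃ u ∈ H, 0 < φ u ∧ ∀ x ∈ H, ∃ k : ℤ, φ x = k * φ u := by
  obtain ⟨a, ha⟩ := Int.subgroup_cyclic ((H.map φ).comap (Int.castAddHom ℝ))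
  rw [← zmultiples_eq_closure] at ha
  have hval : ∀ m : ℤ, (∃ x ∈ H, φ x = m) ↔ ∃ k : ℤ, k * a = m := by
    intro m
    simpa [mem_zmultiples_iff] using SetLike.ext_iff.1 ha m
  obtain ⟨u, hu, hφu⟩ := (hval |a|).2 ⟨a.sign, Int.sign_mul_self_eq_abs a⟩
  refine ⟨u, hu, ?_, fun x hx => ?_⟩
  · obtain ⟨x, hx, hφx⟩ := hne
    obtain ⟨m, hm⟩ := hint x hx
    obtain ⟨k, rfl⟩ := (hval m).1 ⟨x, hx, hm⟩
    have ha0 : a ≠ 0 := by rintro rfl; simp [hm] at hφx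
    rw [hφu]
    exact_mod_cast abs_pos.2 ha0
  · obtain ⟨m, hm⟩ := hint x hx
    obtain ⟨k, rfl⟩ := (hval m).1 ⟨x, hx, hm⟩
    exact ⟨k * a.sign, by rw [hm, hφu, ← Int.cast_mul, mul_assoc, Int.sign_mul_abs]⟩

section PolyhedralCone

variable {E ι κ : Type*} [AddCommGroup E] [Module ℝ E] [Fintype κ]

def polyhedralCone (f : ι → E →ₗ[ℝ] ℝ) (g : κ → E →ₗ[ℝ] ℝ) : Set E :=
  {x | (∀ i, f i x = 0) ∧ ∀ j, 0 ≤ g j x}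

variable (f : ι → E →ₗ[ℝ] ℝ) (g : κ → E →ₗ[ℝ] ℝ)

theorem exists_mem_polyhedralCone_forall_pos :
    ∃ x₀ ∈ polyhedralCone f g, ∀ j, (∃ y ∈ polyhedralCone f g, 0 < g j y) → 0 < g j x₀ := by
  have hwit : ∀ j, ∃ y ∈ polyhedralCone f g,
      (∃ y' ∈ polyhedralCone f g, 0 < g j y') → 0 < g j y := by
    intro j
    by_cases h : ∃ y' ∈ polyhedralCone f g, 0 < g j y'
    · obtain ⟨y, hy, hgy⟩ := h
      exact ⟨y, hy, fun _ => hgy⟩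
    · exact ⟨0, ⟨by simp, by simp⟩, fun h' => absurd h' h⟩
  choose y hy hgy using hwit
  refine ⟨∑ k, y k, ⟨fun i => by simp [map_sum, (hy _).1 i],
    fun j => by simpa [map_sum] using Finset.sum_nonneg fun k _ => (hy k).2 j⟩, fun j hj => ?_⟩
  rw [map_sum]
  exact (hgy j hj).trans_le
    (Finset.single_le_sum (fun k _ => (hy k).2 j) (Finset.mem_univ j))

theorem mem_span_polyhedralCone {w : E} (hfw : ∀ i, f i w = 0)
    (hgw : ∀ j, (∀ y ∈ polyhedralCone f g, g j y = 0) → g j w = 0) :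
    w ∈ span ℝ (polyhedralCone f g) := by
  obtain ⟨x₀, hx₀, hpos⟩ := exists_mem_polyhedralCone_forall_pos f g
  -- `x₀` lies in the relative interior, so `x₀ + ε • w` stays in the cone for small `ε`.
  have hnonneg : ∀ j, ∀ᶠ ε in 𝓝 (0 : ℝ), 0 ≤ g j (x₀ + ε • w) := by
    intro j
    simp only [map_add, map_smul, smul_eq_mul]
    by_cases h : ∃ y ∈ polyhedralCone f g, 0 < g j y
    · have hcont : Continuous fun ε : ℝ => g j x₀ + ε * g j w := by fun_prop
      refine (hcont.tendsto' 0 _ (by simp)).eventually (lt_mem_nhds (hpos j h)) |>.mono ?_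
      exact fun _ => le_of_lt
    · push Not at h
      have hgj : ∀ y ∈ polyhedralCone f g, g j y = 0 := fun y hy => le_antisymm (h y hy) (hy.2 j)
      simp [hgj x₀ hx₀, hgw j hgj]
  obtain ⟨ε, hε, hεpos⟩ : ∃ ε, (∀ j, 0 ≤ g j (x₀ + ε • w)) ∧ 0 < ε :=
    ((eventually_nhdsWithin_of_eventually_nhds (eventually_all.2 hnonneg)).and
      (self_mem_nhdsWithin (s := Set.Ioi 0))).exists
  have hx₁ : x₀ + ε • w ∈ polyhedralCone f g :=
    ⟨fun i => by simp [hx₀.1 i, hfw i], hε⟩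
  have hw : w = ε⁻¹ • ((x₀ + ε • w) - x₀) := by
    rw [add_sub_cancel_left, smul_smul, inv_mul_cancel₀ (ne_of_gt hεpos), one_smul]
  rw [hw]
  exact smul_mem _ _ (sub_mem (subset_span hx₁) (subset_span hx₀))

end PolyhedralCone

namespace TropFan

variable {N : ℕ}

def evalFormLinear (c : Fin N → ℤ) : V N →ₗ[ℝ] ℝ :=
  dotProductEquiv ℝ (Fin N) (Int.cast ∘ c)

@[simp] theorem evalFormLinear_apply (c : Fin N → ℤ) (x : V N) :
    evalFormLinear c x = evalForm c x := rfl

theorem exists_evalForm_eq_intCast (c : Fin N → ℤ) {x : V N} (hx : x ∈ latticePts N) :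
    ∃ m : ℤ, evalForm c x = m := by
  choose m hm using hx
  exact ⟨∑ i, c i * m i, by simp [evalForm, hm]⟩

theorem exists_mem_latticePts_evalForm_ne_zero {ι : Type*} [Fintype ι] (A : ι → Fin N → ℤ)
    (c : Fin N → ℤ) {x : V N} (hx : ∀ i, evalForm (A i) x = 0) (hcx : evalForm c x ≠ 0) :
    ∃ u ∈ latticePts N, (∀ i, evalForm (A i) u = 0) ∧ evalForm c u ≠ 0 := by
  by_contra! hlat
  -- Clearing denominators turns a rational solution into a lattice solution.
  have hrat : ∀ q : Fin N → ℚ, (∀ i, (Int.cast ∘ A i) ⬝ᵥ q = 0) → (Int.cast ∘ c) ⬝ᵥ q = 0 := by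
    intro q hq
    obtain ⟨b, hb⟩ := IsLocalization.exist_integer_multiples_of_finite (nonZeroDivisors ℤ) q
    have hcast : ∀ a : Fin N → ℤ,
        evalForm a (fun j => (((b : ℚ) * q j : ℚ) : ℝ)) =
          (((b : ℚ) * ((Int.cast ∘ a) ⬝ᵥ q) : ℚ) : ℝ) := by
      intro a
      simp only [evalForm, dotProduct, Function.comp_apply, Finset.mul_sum, Rat.cast_mul,
        Rat.cast_intCast, Rat.cast_sum]
      exact Finset.sum_congr rfl fun j _ => by ring
    have hb0 : (b : ℤ) ≠ 0 := nonZeroDivisors.coe_ne_zero b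
    have hmem : (fun j => (((b : ℚ) * q j : ℚ) : ℝ)) ∈ latticePts N := by
      intro j
      obtain ⟨m, hm⟩ := hb j
      have hm' : (b : ℚ) * q j = m := by simpa [Algebra.smul_def] using hm.symm
      exact ⟨m, by simp only [hm', Rat.cast_intCast]⟩
    have := hlat _ hmem fun i => by rw [hcast, hq i]; simp
    rw [hcast] at this
    simpa [hb0] using this
  obtain ⟨μ, hμ⟩ := exists_eq_sum_smul_of_forall_dotProduct_eq_zero _ _ hrat
  have hc : (Int.cast ∘ c : Fin N → ℝ) = ∑ i, (μ i : ℝ) • (Int.cast ∘ A i) := by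
    ext j
    simpa using congrArg (fun v : Fin N → ℚ => (v j : ℝ)) hμ.symm
  apply hcx
  change (Int.cast ∘ c) ⬝ᵥ x = 0
  simp [hc, sum_dotProduct, fun i => show (Int.cast ∘ A i) ⬝ᵥ x = 0 from hx i]

theorem mem_coneLattice {σ : Set (V N)} {x : V N} :
    x ∈ coneLattice σ ↔ x ∈ coneSpan σ ∧ x ∈ latticePts N := by
  rw [coneLattice, AddSubgroup.mem_inf, Submodule.mem_toAddSubgroup]

theorem exists_mem_coneLattice_evalForm_ne_zero {σ : Set (V N)} (hσ : IsCone σ)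
    (c : Fin N → ℤ) {x : V N} (hx : x ∈ σ) (hcx : evalForm c x ≠ 0) :
    ∃ u ∈ coneLattice σ, evalForm c u ≠ 0 := by
  classical
  obtain ⟨n, m, f, g, rfl⟩ := hσ
  set σ' := polyhedralCone (fun i => evalFormLinear (f i)) (fun j => evalFormLinear (g j))
  have hσ' : {x | (∀ i, evalForm (f i) x = 0) ∧ ∀ j, 0 ≤ evalForm (g j) x} = σ' := by
    ext; simp [σ', polyhedralCone]
  rw [hσ'] at hx ⊢
  let A : Fin n ⊕ {j : Fin m // ∀ y ∈ σ', evalForm (g j) y = 0} → Fin N → ℤ :=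
    Sum.elim f fun j => g j
  obtain ⟨u, hu, hAu, hcu⟩ := exists_mem_latticePts_evalForm_ne_zero A c (x := x)
    (by rintro (i | ⟨j, hj⟩); exacts [hx.1 i, hj x hx]) hcx
  exact ⟨u, mem_coneLattice.2 ⟨mem_span_polyhedralCone _ _ (fun i => hAu (.inl i))
    fun j hj => hAu (.inr ⟨j, hj⟩), hu⟩, hcu⟩

structure IsFacetForm (τ σ : Set (V N)) (φ : V N →ₗ[ℝ] ℝ) : Prop where
  coneSpan_le : coneSpan τ ≤ coneSpan σ
  coneDim_succ : coneDim τ + 1 = coneDim σ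
  apply_eq_zero : ∀ x ∈ coneSpan τ, φ x = 0
  nonneg : ∀ x ∈ σ, 0 ≤ φ x
  exists_pos : ∃ x ∈ σ, 0 < φ x

namespace IsFacetForm

variable {τ σ : Set (V N)} {φ g : V N →ₗ[ℝ] ℝ} {u x : V N}

theorem apply_mul_eq (hφ : IsFacetForm τ σ φ) (hg : ∀ y ∈ coneSpan τ, g y = 0)
    (hu : u ∈ coneSpan σ) (hφu : φ u ≠ 0) (hx : x ∈ coneSpan σ) : g x * φ u = φ x * g u :=
  LinearMap.apply_mul_eq_of_finrank_eq_succ hφ.coneSpan_le hφ.coneDim_succ hφ.apply_eq_zero hg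
    hu hφu hx

theorem pos_apply (hφ : IsFacetForm τ σ φ) (hg : ∀ y ∈ coneSpan τ, g y = 0)
    (hgσ : ∀ y ∈ σ, 0 ≤ g y) (hu : u ∈ coneSpan σ) (hφu : 0 < φ u) (hx : x ∈ coneSpan σ)
    (hgx : g x ≠ 0) : 0 < g u := by
  obtain ⟨y, hy, hφy⟩ := hφ.exists_pos
  have hgu : 0 ≤ g u := by
    rw [← mul_nonneg_iff_of_pos_left hφy, ← hφ.apply_mul_eq hg hu hφu.ne' (subset_span hy)]
    exact mul_nonneg (hgσ y hy) hφu.le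
  refine hgu.lt_of_ne fun hgu0 => hgx ?_
  simpa [← hgu0, hφu.ne'] using hφ.apply_mul_eq hg hu hφu.ne' hx

theorem nonneg_apply_iff (hφ : IsFacetForm τ σ φ) (hg : ∀ y ∈ coneSpan τ, g y = 0)
    (hgσ : ∀ y ∈ σ, 0 ≤ g y) (hgpos : ∃ y ∈ σ, 0 < g y) (hx : x ∈ coneSpan σ) :
    0 ≤ g x ↔ 0 ≤ φ x := by
  obtain ⟨y, hy, hφy⟩ := hφ.exists_pos
  obtain ⟨z, hz, hgz⟩ := hgpos
  have hgy := hφ.pos_apply hg hgσ (subset_span hy) hφy (subset_span hz) hgz.ne'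
  rw [← mul_nonneg_iff_of_pos_right hφy, hφ.apply_mul_eq hg (subset_span hy) hφy.ne' hx,
    mul_nonneg_iff_of_pos_right hgy]

theorem sub_zsmul_mem_coneLattice_iff (hφ : IsFacetForm τ σ φ) (hu : u ∈ coneLattice σ)
    (hφu : φ u ≠ 0) (hx : x ∈ coneLattice σ) (k : ℤ) :
    x - k • u ∈ coneLattice τ ↔ φ x = k * φ u := by
  rw [mem_coneLattice] at hu hx ⊢
  have hφsub : φ (x - k • u) = φ x - k * φ u := by rw [map_sub, map_zsmul, zsmul_eq_mul]
  refine ⟨fun h => sub_eq_zero.1 (hφsub ▸ hφ.apply_eq_zero _ h.1), fun h => ⟨?_, ?_⟩⟩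
  · exact LinearMap.mem_of_apply_eq_zero_of_finrank_eq_succ hφ.coneSpan_le hφ.coneDim_succ
      hφ.apply_eq_zero hu.1 hφu (sub_mem hx.1 (zsmul_mem hu.1 k)) (by rw [hφsub, h, sub_self])
  · exact sub_mem hx.2 (zsmul_mem hu.2 k)

theorem isNormalVector (hφ : IsFacetForm τ σ φ) (hu : u ∈ coneLattice σ) (hφu : 0 < φ u)
    (hgen : ∀ y ∈ coneLattice σ, ∃ k : ℤ, φ y = k * φ u) :
    IsNormalVector τ σ u :=
  ⟨hu, fun y hy => (hgen y hy).imp fun k => (hφ.sub_zsmul_mem_coneLattice_iff hu hφu.ne' hy k).2,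
    φ, hφ.apply_eq_zero, hφ.nonneg, hφu⟩

theorem existsUnique_sub_zsmul_mem_coneLattice (hφ : IsFacetForm τ σ φ) (hu : u ∈ coneLattice σ)
    (hφu : 0 < φ u) (hgen : ∀ y ∈ coneLattice σ, ∃ k : ℤ, φ y = k * φ u)
    (hx : x ∈ coneLattice σ) : ∃! k : ℤ, x - k • u ∈ coneLattice τ := by
  simp_rw [hφ.sub_zsmul_mem_coneLattice_iff hu hφu.ne' hx]
  obtain ⟨k, hk⟩ := hgen x hx
  exact ⟨k, hk, fun k' hk' => by exact_mod_cast mul_right_cancel₀ hφu.ne' (hk'.symm.trans hk)⟩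

theorem sub_mem_coneLattice_of_isNormalVector (hφ : IsFacetForm τ σ φ) (hu : u ∈ coneLattice σ)
    (hφu : 0 < φ u) (hgen : ∀ y ∈ coneLattice σ, ∃ k : ℤ, φ y = k * φ u)
    {u' : V N} (hu' : IsNormalVector τ σ u') : u' - u ∈ coneLattice τ := by
  obtain ⟨hu'σ, hu'gen, g, hgτ, hgσ, hgu'⟩ := hu'
  have hu_span := (mem_coneLattice.1 hu).1
  have hu'_span := (mem_coneLattice.1 hu'σ).1
  have hgu : 0 < g u := hφ.pos_apply hgτ hgσ hu_span hφu hu'_span hgu'.ne'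
  have hφu' : 0 < φ u' := by
    have := hφ.apply_mul_eq hgτ hu_span hφu.ne' hu'_span
    nlinarith [mul_pos hgu' hφu]
  -- `u` and `u'` are integer multiples of each other modulo `Λ_τ`, with positive factors.
  obtain ⟨k, hk⟩ := hgen u' hu'σ
  obtain ⟨k', hk'⟩ := hu'gen u hu
  have hk'φ : φ u = k' * φ u' := by
    have := hφ.apply_eq_zero _ (mem_coneLattice.1 hk').1
    rwa [map_sub, map_zsmul, zsmul_eq_mul, sub_eq_zero] at this
  have hkpos : (0 : ℝ) < k := by nlinarith
  have hkk' : (k' * k : ℝ) = 1 := by nlinarith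
  have hk1 : k = 1 := Int.eq_one_of_mul_eq_one_left (by exact_mod_cast hkpos.le)
    (by exact_mod_cast hkk')
  simpa [hk1] using (hφ.sub_zsmul_mem_coneLattice_iff hu hφu.ne' hu'σ 1).2 (by simp [hk, hk1])

end IsFacetForm

/-- Let `τ < σ` be cones in `V = Λ ⊗ ℝ` with `dim τ = dim σ − 1`
(`τ` a proper face of `σ`). Then the quotient lattice `Λ_σ/Λ_τ` is isomorphic to
`ℤ` (there is `u ∈ Λ_σ` such that every `x ∈ Λ_σ` is uniquely `k • u` modulo
`Λ_τ`), the image of `σ` in the one-dimensional space `V_σ/V_τ` is contained in a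
unique closed half-line, and there is a unique generator `u_{σ/τ}` of `Λ_σ/Λ_τ`
lying in this half-line (the primitive normal vector of `σ` relative to `τ`). -/
theorem stmt_0 (N : ℕ) (τ σ : Set (V N)) (hface : IsFace τ σ) (hne : τ ≠ σ)
    (hdim : coneDim τ + 1 = coneDim σ) :
    ∃ u : V N, IsNormalVector τ σ u ∧
      -- `u` generates `Λ_σ/Λ_τ ≅ ℤ` freely:
      (∀ x ∈ coneLattice σ, ∃! k : ℤ, x - k • u ∈ coneLattice τ) ∧
      -- uniqueness of the primitive normal vector (modulo `Λ_τ`):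
      (∀ u' : V N, IsNormalVector τ σ u' → u' - u ∈ coneLattice τ) ∧
      -- the half-line of `V_σ/V_τ` containing the image of `σ` is unique: any two
      -- linear forms vanishing on `V_τ`, nonnegative and not identically zero on
      -- `σ`, cut out the same half-space of `V_σ`:
      (∀ g g' : (V N) →ₗ[ℝ] ℝ,
        ((∀ x ∈ coneSpan τ, g x = 0) ∧ (∀ x ∈ σ, 0 ≤ g x) ∧ ∃ x ∈ σ, 0 < g x) →
        ((∀ x ∈ coneSpan τ, g' x = 0) ∧ (∀ x ∈ σ, 0 ≤ g' x) ∧ ∃ x ∈ σ, 0 < g' x) →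
        ∀ x ∈ coneSpan σ, (0 ≤ g x ↔ 0 ≤ g' x)) := by
  obtain ⟨-, hσ, hτσ, c, hc, hτ⟩ := hface
  have hφ : IsFacetForm τ σ (evalFormLinear c) := by
    refine ⟨span_mono hτσ, hdim, fun x hx => ?_, hc, ?_⟩
    · refine (span_le.2 fun y hy => ?_ : coneSpan τ ≤ LinearMap.ker (evalFormLinear c)) hx
      rw [hτ] at hy
      exact hy.2
    · by_contra! h
      exact hne (hτ.trans (Set.sep_eq_self_iff_mem_true.2 fun x hx =>
        le_antisymm (h x hx) (hc x hx)))
  obtain ⟨x, hx, hcx⟩ := hφ.exists_pos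
  obtain ⟨u, hu, hφu, hgen⟩ :=
    (coneLattice σ).exists_forall_apply_eq_intCast_mul (evalFormLinear c).toAddMonoidHom
      (fun y hy => exists_evalForm_eq_intCast c (mem_coneLattice.1 hy).2)
      (exists_mem_coneLattice_evalForm_ne_zero hσ c hx hcx.ne')
  refine ⟨u, hφ.isNormalVector hu hφu hgen, fun y hy => ?_, fun u' hu' => ?_,
    fun g g' ⟨hgτ, hgσ, hg⟩ ⟨hg'τ, hg'σ, hg'⟩ y hy => ?_⟩
  · exact hφ.existsUnique_sub_zsmul_mem_coneLattice hu hφu hgen hy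
  · exact hφ.sub_mem_coneLattice_of_isNormalVector hu hφu hgen hu'
  · exact (hφ.nonneg_apply_iff hgτ hgσ hg hy).trans (hφ.nonneg_apply_iff hg'τ hg'σ hg' hy).symm

end TropFan
end

section
/- Let (Y, ω_Y) be a refinement of a weighted fan (X, ω_X) of dimension n in V. Then (Y, ω_Y) is a tropical fan if and only if (X, ω_X) is a tropical fan. Consequently, the property of being tropical is well-defined on equivalence classes of weighted fans. -/
open scoped BigOperators

namespace TropFan

/-!
Let `τ` be a codimension-one cone of the refinement `Y` and `C` the smallest cone of `X`
containing it, so that `dim C` is `n - 1` or `n`.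

If `dim C = n - 1`, then `V_τ = V_C`, and `σ ↦ C_{Y,X}(σ)` is a bijection from the `n`-cones
of `Y` around `τ` onto those of `X` around `C` which preserves spans and weights. Primitive
normal vectors correspond as well: the lattices agree because the spans do, and the sign
condition transfers because two functionals vanishing on a hyperplane of `V_σ` are proportional
on `V_σ`. So `Y` is balanced at `τ` iff `X` is balanced at `C`.

If `dim C = n`, every `n`-cone of `Y` around `τ` lies in `C`, and there are exactly two of them,
one on each side of `V_τ`. Both have weight `ω_X(C)` and their normal vectors are opposite
modulo `V_τ`, so `Y` is balanced at `τ` whatever `X` is.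

Conversely, each codimension-one cone `τ` of `X` contains a cone `τ'` of `Y` with
`V_{τ'} = V_τ`: a point of `τ` on a moment curve `t ↦ ∑ tⁱ⁺¹ vᵢ` avoids the finitely many
cones of `Y` that meet `τ` in a lower-dimensional set. This reduces balancing of `X` at `τ` to
the first case.
-/

open Module Filter Topology

section LinearAlgebra

variable {K E : Type*} [Field K] [AddCommGroup E] [Module K E] [FiniteDimensional K E]

theorem apply_mul_apply_eq_of_finrank_le_succ {W U : Submodule K E} (hWU : W ≤ U)
    (hdim : finrank K U ≤ finrank K W + 1) {a b : E →ₗ[K] K}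
    (ha : ∀ w ∈ W, a w = 0) (hb : ∀ w ∈ W, b w = 0)
    {x y : E} (hx : x ∈ U) (hy : y ∈ U) (hax : a x ≠ 0) :
    a x * b y = b x * a y := by
  have hker : U ⊓ LinearMap.ker a = W := by
    have hle : W ≤ U ⊓ LinearMap.ker a := fun w hw => ⟨hWU hw, ha w hw⟩
    have hlt : U ⊓ LinearMap.ker a < U :=
      inf_le_left.lt_of_ne fun heq => hax (heq.ge hx).2
    exact (Submodule.eq_of_le_of_finrank_le hle
      (by have := Submodule.finrank_lt_finrank_of_lt hlt; omega)).symm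
  have hz : a x • y - a y • x ∈ W := by
    rw [← hker]
    exact ⟨U.sub_mem (U.smul_mem _ hy) (U.smul_mem _ hx), by simp [mul_comm]⟩
  have := hb _ hz
  simp only [map_sub, map_smul, smul_eq_mul] at this
  linear_combination this

theorem exists_fin_span_eq (s : Set E) : ∃ (k : ℕ) (v : Fin k → E), (∀ i, v i ∈ s) ∧
    Submodule.span K (Set.range v) = Submodule.span K s := by
  obtain ⟨b, hbs, hspan, hli⟩ := exists_linearIndependent K s
  obtain ⟨k, v, hv⟩ := hli.setFinite.fin_embedding
  exact ⟨k, v, fun i => hbs (hv ▸ Set.mem_range_self i), by rw [hv, hspan]⟩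

end LinearAlgebra

open Polynomial in
theorem finite_setOf_sum_pow_smul_mem {E : Type*} [AddCommGroup E] [Module ℝ E] {k : ℕ}
    (v : Fin k → E) {S : Submodule ℝ E} {i : Fin k} (hi : v i ∉ S) :
    {t : ℝ | ∑ j : Fin k, t ^ ((j : ℕ) + 1) • v j ∈ S}.Finite := by
  obtain ⟨φ, hφi, hφS⟩ := S.exists_dual_map_eq_bot_of_notMem hi inferInstance
  -- `φ` along the curve is the polynomial `P`, nonzero because of its coefficient `φ (v i)`
  set P : ℝ[X] := ∑ j : Fin k, C (φ (v j)) * X ^ ((j : ℕ) + 1)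
  have hP : P ≠ 0 := fun h => hφi <| by
    simpa [P, finsetSum_coeff, coeff_C_mul_X_pow, Fin.val_inj] using
      congrArg (coeff · ((i : ℕ) + 1)) h
  refine (finite_setOfPred_isRoot hP).subset fun t ht => ?_
  have : φ (∑ j : Fin k, t ^ ((j : ℕ) + 1) • v j) = 0 := by
    simpa [hφS] using Submodule.mem_map_of_mem (f := φ) ht
  rw [map_sum] at this
  simp only [Set.mem_ofPred_eq, IsRoot.def, P, eval_finsetSum, eval_mul, eval_C, eval_pow, eval_X]
  rw [← this]
  exact Finset.sum_congr rfl fun j _ => by rw [map_smul, smul_eq_mul, mul_comm]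

variable {N : ℕ}

def evalFormLM (c : Fin N → ℤ) : V N →ₗ[ℝ] ℝ where
  toFun := evalForm c
  map_add' x y := by simp only [evalForm, Pi.add_apply, mul_add, Finset.sum_add_distrib]
  map_smul' r x := by
    simp only [evalForm, Pi.smul_apply, smul_eq_mul, RingHom.id_apply, Finset.mul_sum]
    exact Finset.sum_congr rfl fun i _ => by ring

theorem eq_zero_of_mem_coneSpan {σ : Set (V N)} {φ : V N →ₗ[ℝ] ℝ} (h : ∀ x ∈ σ, φ x = 0)
    {x : V N} (hx : x ∈ coneSpan σ) : φ x = 0 :=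
  (Submodule.span_le (p := LinearMap.ker φ)).mpr h hx

theorem subset_coneSpan {σ : Set (V N)} : σ ⊆ coneSpan σ :=
  Submodule.subset_span

theorem coneSpan_mono {σ σ' : Set (V N)} (h : σ ⊆ σ') : coneSpan σ ≤ coneSpan σ' :=
  Submodule.span_mono h

theorem coneDim_mono {σ σ' : Set (V N)} (h : σ ⊆ σ') : coneDim σ ≤ coneDim σ' :=
  Submodule.finrank_mono (coneSpan_mono h)

theorem coneSpan_eq_of_subset {σ σ' : Set (V N)} (h : σ ⊆ σ') (hd : coneDim σ' ≤ coneDim σ) :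
    coneSpan σ = coneSpan σ' :=
  Submodule.eq_of_le_of_finrank_le (coneSpan_mono h) hd

theorem coneDim_lt_of_notMem_coneSpan {σ σ' : Set (V N)} (h : σ ⊆ σ') {q : V N} (hq : q ∈ σ')
    (hqσ : q ∉ coneSpan σ) : coneDim σ < coneDim σ' :=
  Submodule.finrank_lt_finrank_of_lt <|
    (coneSpan_mono h).lt_of_ne fun heq => hqσ (heq ▸ subset_coneSpan hq)

theorem exists_mem_notMem_coneSpan {σ C : Set (V N)} (h : coneDim C < coneDim σ) :
    ∃ x ∈ σ, x ∉ coneSpan C :=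
  Set.not_subset.mp fun hsub =>
    (Submodule.finrank_mono (Submodule.span_le.mpr hsub : coneSpan σ ≤ coneSpan C)).not_gt h

theorem coneLattice_congr {σ σ' : Set (V N)} (h : coneSpan σ = coneSpan σ') :
    coneLattice σ = coneLattice σ' := by
  rw [coneLattice, coneLattice, h]

namespace IsCone

variable {σ : Set (V N)}

theorem exists_linearMap (h : IsCone σ) :
    ∃ (m k : ℕ) (f : Fin m → V N →ₗ[ℝ] ℝ) (g : Fin k → V N →ₗ[ℝ] ℝ),
      σ = {x | (∀ i, f i x = 0) ∧ ∀ j, 0 ≤ g j x} := by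
  obtain ⟨m, k, f, g, rfl⟩ := h
  exact ⟨m, k, evalFormLM ∘ f, evalFormLM ∘ g, rfl⟩

theorem zero_mem (h : IsCone σ) : (0 : V N) ∈ σ := by
  obtain ⟨m, k, f, g, rfl⟩ := h.exists_linearMap
  simp

theorem add_mem (h : IsCone σ) {x y : V N} (hx : x ∈ σ) (hy : y ∈ σ) : x + y ∈ σ := by
  obtain ⟨m, k, f, g, rfl⟩ := h.exists_linearMap
  exact ⟨fun i => by simp [hx.1 i, hy.1 i],
    fun j => by simpa using add_nonneg (hx.2 j) (hy.2 j)⟩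

theorem smul_mem (h : IsCone σ) {x : V N} (hx : x ∈ σ) {a : ℝ} (ha : 0 ≤ a) : a • x ∈ σ := by
  obtain ⟨m, k, f, g, rfl⟩ := h.exists_linearMap
  exact ⟨fun i => by simp [hx.1 i], fun j => by simpa using mul_nonneg ha (hx.2 j)⟩

theorem add_smul_mem (h : IsCone σ) {p x : V N} (hp : p ∈ σ) (hx : x ∈ σ) {a : ℝ} (ha : 0 ≤ a) :
    p + a • x ∈ σ :=
  h.add_mem hp (h.smul_mem hx ha)

theorem sum_smul_mem (h : IsCone σ) {ι : Type*} (s : Finset ι) {c : ι → ℝ} {v : ι → V N}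
    (hc : ∀ i, 0 ≤ c i) (hv : ∀ i, v i ∈ σ) : ∑ i ∈ s, c i • v i ∈ σ :=
  Finset.sum_induction _ (· ∈ σ) (fun _ _ => h.add_mem) h.zero_mem
    fun i _ => h.smul_mem (hv i) (hc i)

theorem isClosed (h : IsCone σ) : IsClosed σ := by
  obtain ⟨m, k, f, g, rfl⟩ := h.exists_linearMap
  simp only [Set.ofPred_and, Set.ofPred_forall]
  exact (isClosed_iInter fun i => isClosed_eq (f i).continuous_of_finiteDimensional
    continuous_const).inter (isClosed_iInter fun j => isClosed_le continuous_const
      (g j).continuous_of_finiteDimensional)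

theorem exists_add_smul_mem (h : IsCone σ) {p x : V N} (hp : p ∈ σ) (hx : x ∈ coneSpan σ)
    (hdir : ∀ φ : V N →ₗ[ℝ] ℝ, (∀ y ∈ σ, 0 ≤ φ y) → φ p = 0 → 0 ≤ φ x) :
    ∃ ε : ℝ, 0 < ε ∧ p + ε • x ∈ σ := by
  obtain ⟨m, k, f, g, hσ⟩ := h.exists_linearMap
  have hpσ := hσ ▸ hp
  have hf : ∀ i, f i x = 0 := fun i => eq_zero_of_mem_coneSpan (fun y hy => (hσ ▸ hy).1 i) hx
  have hg : ∀ j, ∀ᶠ ε in 𝓝[>] (0 : ℝ), 0 ≤ g j (p + ε • x) := by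
    intro j
    rcases (hpσ.2 j).lt_or_eq with hpos | hzero
    · have hcont : Continuous fun ε : ℝ => g j (p + ε • x) := by fun_prop
      refine nhdsWithin_le_nhds ((hcont.tendsto' 0 _ (by simp)).eventually (lt_mem_nhds hpos)
        |>.mono fun ε hε => hε.le)
    · have hgx := hdir (g j) (fun y hy => (hσ ▸ hy).2 j) hzero.symm
      filter_upwards [self_mem_nhdsWithin] with ε (hε : 0 < ε)
      simpa [← hzero] using mul_nonneg hε.le hgx
  obtain ⟨ε, hε, hεpos⟩ := ((eventually_all.2 hg).and self_mem_nhdsWithin).exists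
  exact ⟨ε, hεpos, hσ ▸ ⟨fun i => by simp [hpσ.1 i, hf i], hε⟩⟩

theorem isFace_sep (h : IsCone σ) {c : Fin N → ℤ} (hc : ∀ x ∈ σ, 0 ≤ evalForm c x) :
    IsFace {x ∈ σ | evalForm c x = 0} σ := by
  obtain ⟨m, k, f, g, rfl⟩ := h
  refine ⟨⟨m + 1, k, Fin.cons c f, g, ?_⟩, ⟨m, k, f, g, rfl⟩, fun x hx => hx.1, c, hc, rfl⟩
  ext x
  simp only [Set.mem_ofPred_eq, Fin.forall_fin_succ, Fin.cons_zero, Fin.cons_succ]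
  tauto

end IsCone

namespace IsFace

variable {τ σ : Set (V N)}

theorem subset (h : IsFace τ σ) : τ ⊆ σ := h.2.2.1

theorem exists_supporting_form (h : IsFace τ σ) : ∃ c : Fin N → ℤ, (∀ x ∈ σ, 0 ≤ evalFormLM c x) ∧
    (∀ x ∈ coneSpan τ, evalFormLM c x = 0) ∧ ∀ x ∈ σ, x ∉ τ → 0 < evalFormLM c x := by
  obtain ⟨-, -, -, c, hc, rfl⟩ := h
  exact ⟨c, hc, fun x hx => eq_zero_of_mem_coneSpan (fun y hy => hy.2) hx,
    fun x hx hxτ => (hc x hx).lt_of_ne' fun h0 => hxτ ⟨hx, h0⟩⟩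

theorem eq_of_coneSpan_le (h : IsFace τ σ) (hs : coneSpan σ ≤ coneSpan τ) : τ = σ := by
  obtain ⟨c, -, hc0, hcpos⟩ := h.exists_supporting_form
  refine h.subset.antisymm fun x hx => ?_
  by_contra hxτ
  exact (hcpos x hx hxτ).ne' (hc0 x (hs (subset_coneSpan hx)))

theorem eq_of_coneDim_le (h : IsFace τ σ) (hd : coneDim σ ≤ coneDim τ) : τ = σ :=
  h.eq_of_coneSpan_le (coneSpan_eq_of_subset h.subset hd).ge

end IsFace

/-- The functional characterisation of the relative interior of a cone. -/
def IsGenericPoint (τ : Set (V N)) (p : V N) : Prop :=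
  p ∈ τ ∧ ∀ φ : V N →ₗ[ℝ] ℝ, (∀ x ∈ τ, 0 ≤ φ x) → φ p = 0 → ∀ x ∈ coneSpan τ, φ x = 0

theorem IsCone.exists_isGenericPoint {τ : Set (V N)} (h : IsCone τ) :
    ∃ p, IsGenericPoint τ p := by
  obtain ⟨k, v, hvτ, hspan⟩ := exists_fin_span_eq (K := ℝ) τ
  refine ⟨∑ i, v i, by simpa using h.sum_smul_mem Finset.univ (fun _ => zero_le_one) hvτ,
    fun φ hφ hp x hx => ?_⟩
  rw [map_sum, Finset.sum_eq_zero_iff_of_nonneg fun i _ => hφ _ (hvτ i)] at hp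
  rw [coneSpan, ← hspan] at hx
  exact eq_zero_of_mem_coneSpan (σ := Set.range v)
    (by rintro _ ⟨i, rfl⟩; exact hp i (Finset.mem_univ i)) hx

theorem IsMinConeOver.unique {F : Fan N} {A C C' : Set (V N)} (h : IsMinConeOver F A C)
    (h' : IsMinConeOver F A C') : C = C' :=
  (h.2.2 C' h'.1 h'.2.1).antisymm (h'.2.2 C h.1 h.2.1)

namespace Fan

variable (F : Fan N) {τ σ : Set (V N)}

theorem isFace_of_subset (hτ : τ ∈ F.cones) (hσ : σ ∈ F.cones) (h : τ ⊆ σ) : IsFace τ σ := by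
  simpa [Set.inter_eq_right.mpr h] using F.inter_face σ hσ τ hτ

theorem eq_of_subset_of_coneDim_le (hτ : τ ∈ F.cones) (hσ : σ ∈ F.cones) (h : τ ⊆ σ)
    (hd : coneDim σ ≤ coneDim τ) : τ = σ :=
  (F.isFace_of_subset hτ hσ h).eq_of_coneDim_le hd

theorem coneDim_le_of_isPure {n : ℕ} (hF : F.IsPure n) (hσ : σ ∈ F.cones) : coneDim σ ≤ n := by
  obtain ⟨σ', ⟨-, hd⟩, hsub⟩ := hF σ hσ
  exact hd ▸ coneDim_mono hsub

theorem subset_of_isGenericPoint (hτ : τ ∈ F.cones) (hσ : σ ∈ F.cones) {p : V N}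
    (hp : IsGenericPoint τ p) (hpσ : p ∈ σ) : τ ⊆ σ := by
  obtain ⟨c, hc, hc0, hcpos⟩ := (F.inter_face τ hτ σ hσ).exists_supporting_form
  have hvan := hp.2 (evalFormLM c) hc (hc0 p (subset_coneSpan ⟨hp.1, hpσ⟩))
  intro x hx
  by_contra hxσ
  exact (hcpos x hx fun h => hxσ h.2).ne' (hvan x (subset_coneSpan hx))

theorem subset_of_coneSpan_le (hτ : τ ∈ F.cones) (hσ : σ ∈ F.cones) {A : Set (V N)}
    (hAτ : A ⊆ τ) (hAσ : A ⊆ σ) (hspan : coneSpan τ ≤ coneSpan A) : τ ⊆ σ := by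
  rw [← (F.inter_face τ hτ σ hσ).eq_of_coneSpan_le
    (hspan.trans (coneSpan_mono (Set.subset_inter hAτ hAσ)))]
  exact Set.inter_subset_right

theorem isMinConeOver_of_coneSpan_le (hτ : τ ∈ F.cones) {A : Set (V N)} (hA : A ⊆ τ)
    (hspan : coneSpan τ ≤ coneSpan A) : IsMinConeOver F A τ :=
  ⟨hτ, hA, fun _ hσ hAσ => F.subset_of_coneSpan_le hτ hσ hA hAσ hspan⟩

theorem exists_isMinConeOver {A : Set (V N)} (h : ∃ σ ∈ F.cones, A ⊆ σ) :
    ∃ C, IsMinConeOver F A C := by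
  obtain ⟨C, ⟨hC, hAC⟩, hmin⟩ :=
    (F.finite.subset fun _ h => h.1 : {σ | σ ∈ F.cones ∧ A ⊆ σ}.Finite).exists_minimal h
  refine ⟨C, hC, hAC, fun σ hσ hAσ => ?_⟩
  have hCσ : C ∩ σ ∈ F.cones := F.faces_mem C hC _ (F.inter_face C hC σ hσ)
  exact (hmin ⟨hCσ, Set.subset_inter hAC hAσ⟩ Set.inter_subset_left).trans
    Set.inter_subset_right

theorem eq_of_mem_of_notMem_coneSpan {σ₁ σ₂ : Set (V N)} (hσ₁ : σ₁ ∈ F.cones)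
    (hσ₂ : σ₂ ∈ F.cones) (hd₁ : coneDim σ₁ ≤ coneDim τ + 1) (hd₂ : coneDim σ₂ ≤ coneDim τ + 1)
    (h₁ : τ ⊆ σ₁) (h₂ : τ ⊆ σ₂) {q : V N} (hq₁ : q ∈ σ₁) (hq₂ : q ∈ σ₂)
    (hq : q ∉ coneSpan τ) : σ₁ = σ₂ := by
  have hI : σ₁ ∩ σ₂ ∈ F.cones := F.faces_mem σ₁ hσ₁ _ (F.inter_face σ₁ hσ₁ σ₂ hσ₂)
  have hdI := coneDim_lt_of_notMem_coneSpan (Set.subset_inter h₁ h₂) ⟨hq₁, hq₂⟩ hq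
  rw [← F.eq_of_subset_of_coneDim_le hI hσ₁ Set.inter_subset_left (by omega),
    F.eq_of_subset_of_coneDim_le hI hσ₂ Set.inter_subset_right (by omega)]

theorem exists_add_smul_mem_conesOfDim {n : ℕ} (hF : F.IsPure n) (hτ : τ ∈ F.cones) {p x : V N}
    (hp : IsGenericPoint τ p) (hx : ∀ ε : ℝ, 0 < ε → p + ε • x ∈ F.support) :
    ∃ ε : ℝ, 0 < ε ∧ ∃ σ ∈ F.conesOfDim n, τ ⊆ σ ∧ p + ε • x ∈ σ := by
  have hev : ∀ᶠ ε in 𝓝[>] (0 : ℝ), ∀ Z ∈ F.cones, p + ε • x ∈ Z → p ∈ Z := by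
    refine (eventually_all_finite F.finite).2 fun Z hZ => ?_
    by_cases hpZ : p ∈ Z
    · exact Eventually.of_forall fun _ _ => hpZ
    have hcont : Continuous fun ε : ℝ => p + ε • x := by fun_prop
    refine nhdsWithin_le_nhds <| ((hcont.tendsto' 0 p (by simp)).eventually
      ((F.isCone Z hZ).isClosed.isOpen_compl.eventually_mem hpZ)).mono fun ε h h' => ?_
    exact absurd h' h
  obtain ⟨ε, hε, hεpos⟩ := (hev.and self_mem_nhdsWithin).exists
  obtain ⟨Z, hZ, hqZ⟩ : ∃ Z ∈ F.cones, p + ε • x ∈ Z := by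
    simpa [Fan.support] using hx ε hεpos
  obtain ⟨σ, hσ, hZσ⟩ := hF Z hZ
  exact ⟨ε, hεpos, σ, hσ, (F.subset_of_isGenericPoint hτ hZ hp (hε Z hZ hqZ)).trans hZσ,
    hZσ hqZ⟩

def topConesOver (n : ℕ) (τ : Set (V N)) : Set (Set (V N)) :=
  {σ | σ ∈ F.conesOfDim n ∧ IsFace τ σ ∧ τ ≠ σ}

theorem mem_topConesOver {n : ℕ} (hn : 1 ≤ n) (hτ : τ ∈ F.conesOfDim (n - 1)) :
    σ ∈ F.topConesOver n τ ↔ σ ∈ F.conesOfDim n ∧ τ ⊆ σ := by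
  refine ⟨fun h => ⟨h.1, h.2.1.subset⟩, fun h => ⟨h.1, F.isFace_of_subset hτ.1 h.1.1 h.2, ?_⟩⟩
  rintro rfl
  have := h.1.2.symm.trans hτ.2
  omega

theorem topConesOver_eq_empty (hτ : τ ∈ F.conesOfDim 0) : F.topConesOver 0 τ = ∅ :=
  Set.eq_empty_of_forall_notMem fun _ hσ =>
    hσ.2.2 (hσ.2.1.eq_of_coneDim_le (hσ.1.2.trans hτ.2.symm).le)

theorem coneDim_le_of_mem_topConesOver {n : ℕ} (hτ : τ ∈ F.conesOfDim (n - 1))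
    (hσ : σ ∈ F.topConesOver n τ) : coneDim σ ≤ coneDim τ + 1 := by
  rw [hσ.1.2, hτ.2]
  omega

theorem eq_of_same_side {n : ℕ} (hτ : τ ∈ F.conesOfDim (n - 1)) {σ₁ σ₂ : Set (V N)}
    (hσ₁ : σ₁ ∈ F.topConesOver n τ) (hσ₂ : σ₂ ∈ F.topConesOver n τ)
    (hspan : coneSpan σ₂ ≤ coneSpan σ₁) {h : V N →ₗ[ℝ] ℝ} (hh : ∀ x ∈ coneSpan τ, h x = 0)
    {x₁ x₂ : V N} (hx₁ : x₁ ∈ σ₁) (hx₂ : x₂ ∈ σ₂) (hpos₁ : 0 < h x₁) (hpos₂ : 0 < h x₂) :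
    σ₁ = σ₂ := by
  have h₁ := hσ₁.2.1.subset
  have hd₁ := F.coneDim_le_of_mem_topConesOver hτ hσ₁
  obtain ⟨p, hp⟩ := (F.isCone τ hτ.1).exists_isGenericPoint
  have hx₂σ₁ : x₂ ∈ coneSpan σ₁ := hspan (subset_coneSpan hx₂)
  -- a functional supporting `σ₁` at `p` vanishes on `V_τ`, hence is a multiple of `h` on `V_{σ₁}`
  obtain ⟨ε, hε, hq₁⟩ := (F.isCone σ₁ hσ₁.1.1).exists_add_smul_mem (h₁ hp.1) hx₂σ₁
    fun φ hφ hφp => by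
      have hprop := apply_mul_apply_eq_of_finrank_le_succ (coneSpan_mono h₁) hd₁ hh
        (hp.2 φ (fun x hx => hφ x (h₁ hx)) hφp) hx₂σ₁ (subset_coneSpan hx₁) hpos₂.ne'
      exact nonneg_of_mul_nonneg_left (hprop ▸ mul_nonneg hpos₂.le (hφ x₁ hx₁)) hpos₁
  have hq : p + ε • x₂ ∉ coneSpan τ := fun hmem => by
    have := hh _ hmem
    rw [map_add, map_smul, hh p (subset_coneSpan hp.1), smul_eq_mul, zero_add] at this
    exact (mul_pos hε hpos₂).ne' this
  exact F.eq_of_mem_of_notMem_coneSpan hσ₁.1.1 hσ₂.1.1 hd₁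
    (F.coneDim_le_of_mem_topConesOver hτ hσ₂) h₁ hσ₂.2.1.subset hq₁
    ((F.isCone σ₂ hσ₂.1.1).add_smul_mem (hσ₂.2.1.subset hp.1) hx₂ hε.le) hq

/-- The cone `C_{Y,X}(A)`; the value `∅` is junk when no cone of `F` contains `A`. -/
noncomputable def minCone (A : Set (V N)) : Set (V N) :=
  open Classical in if h : ∃ C, IsMinConeOver F A C then h.choose else ∅

end Fan

theorem IsMinConeOver.minCone_eq {F : Fan N} {A C : Set (V N)} (h : IsMinConeOver F A C) :
    F.minCone A = C := by
  have hex : ∃ C, IsMinConeOver F A C := ⟨C, h⟩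
  rw [Fan.minCone, dif_pos hex]
  exact hex.choose_spec.unique h

namespace IsNormalVector

variable {τ σ : Set (V N)} {u : V N}

theorem apply_pos (hu : IsNormalVector τ σ u) (hτσ : τ ⊆ σ) (hd : coneDim σ ≤ coneDim τ + 1)
    {h : V N →ₗ[ℝ] ℝ} (hh : ∀ x ∈ coneSpan τ, h x = 0) {x₀ : V N} (hx₀ : x₀ ∈ σ)
    (hpos : 0 < h x₀) : 0 < h u := by
  obtain ⟨huσ, -, g, hg0, hgσ, hgu⟩ := hu
  have hprop := apply_mul_apply_eq_of_finrank_le_succ (coneSpan_mono hτσ) hd hh hg0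
    (subset_coneSpan hx₀) huσ.1 hpos.ne'
  exact pos_of_mul_pos_right (hprop ▸ mul_pos hpos hgu) (hgσ x₀ hx₀)

theorem of_coneSpan_eq (hu : IsNormalVector τ σ u) {τ' σ' : Set (V N)}
    (hτ : coneSpan τ = coneSpan τ') (hσ : coneSpan σ = coneSpan σ') {g : V N →ₗ[ℝ] ℝ}
    (hg0 : ∀ x ∈ coneSpan τ', g x = 0) (hgσ : ∀ x ∈ σ', 0 ≤ g x) (hgu : 0 < g u) :
    IsNormalVector τ' σ' u := by
  obtain ⟨huσ, hgen, -⟩ := hu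
  rw [coneLattice_congr hτ, coneLattice_congr hσ] at *
  exact ⟨huσ, hgen, g, hg0, hgσ, hgu⟩

theorem add_mem_coneSpan {σ' : Set (V N)} {u' : V N} (hu : IsNormalVector τ σ u)
    (hu' : IsNormalVector τ σ' u') (hσ : coneSpan σ = coneSpan σ') {h : V N →ₗ[ℝ] ℝ}
    (hh : ∀ x ∈ coneSpan τ, h x = 0) (hpos : 0 < h u) (hneg : h u' < 0) :
    u + u' ∈ coneSpan τ := by
  obtain ⟨huσ, hgen, -⟩ := hu
  obtain ⟨hu'σ, hgen', -⟩ := hu'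
  rw [coneLattice_congr hσ] at huσ hgen
  have hmul : ∀ {v w : V N} {j : ℤ}, v - j • w ∈ coneLattice τ → h v = j * h w := fun hv => by
    have := hh _ hv.1
    rw [map_sub, map_zsmul, zsmul_eq_mul] at this
    linarith
  obtain ⟨k, hk⟩ := hgen u' hu'σ
  obtain ⟨k', hk'⟩ := hgen' u huσ
  have e := hmul hk
  have e' := hmul hk'
  have hkk' : k * k' = 1 := by
    have : ((k * k' : ℤ) : ℝ) - 1 = 0 := by
      have h0 : ((k : ℝ) * k' - 1) * h u = 0 := by linear_combination (-(k' : ℝ)) * e - e'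
      push_cast
      exact (mul_eq_zero.mp h0).resolve_right hpos.ne'
    exact_mod_cast sub_eq_zero.mp this
  have hk1 : k = -1 := by
    rcases Int.eq_one_or_neg_one_of_mul_eq_one' hkk' with ⟨rfl, -⟩ | ⟨rfl, -⟩
    · push_cast at e; linarith
    · rfl
  rw [hk1, neg_one_zsmul, sub_neg_eq_add, add_comm] at hk
  exact hk.1

end IsNormalVector

def IsBalancedAt (F : Fan N) (n : ℕ) (w : Set (V N) → ℤ) (τ : Set (V N)) : Prop :=
  ∀ u : Set (V N) → V N, (∀ σ ∈ F.topConesOver n τ, IsNormalVector τ σ (u σ)) →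
    (∑ᶠ σ ∈ F.topConesOver n τ, w σ • u σ) ∈ coneSpan τ

theorem isBalanced_iff {F : Fan N} {n : ℕ} {w : Set (V N) → ℤ} :
    IsBalanced F n w ↔ ∀ τ ∈ F.conesOfDim (n - 1), IsBalancedAt F n w τ := by
  simp only [IsBalanced, IsBalancedAt, Fan.topConesOver, Set.mem_ofPred_eq, and_imp]

theorem isBalanced_zero (F : Fan N) (w : Set (V N) → ℤ) : IsBalanced F 0 w :=
  isBalanced_iff.mpr fun τ hτ u _ => by
    rw [F.topConesOver_eq_empty hτ, finsum_mem_empty]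
    exact zero_mem _

namespace IsRefinement

variable {n : ℕ} {X Y : WeightedFan N n} {τ C : Set (V N)}

theorem mem_support (href : IsRefinement Y X) {σ : Set (V N)} (hσ : σ ∈ X.cones) {x : V N}
    (hx : x ∈ σ) : x ∈ Y.support :=
  href.2.1 ▸ Set.mem_biUnion hσ hx

theorem isMinConeOver_minCone (href : IsRefinement Y X) {σ : Set (V N)} (hσ : σ ∈ Y.cones) :
    IsMinConeOver X.toFan σ (X.minCone σ) := by
  obtain ⟨D, hD⟩ := X.exists_isMinConeOver (href.1 σ hσ)
  exact hD.minCone_eq ▸ hD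

theorem minCone_mem_topConesOver (hn : 1 ≤ n) (href : IsRefinement Y X)
    (hτ : τ ∈ Y.conesOfDim (n - 1)) (hC : IsMinConeOver X.toFan τ C) (hCd : coneDim C = n - 1)
    {σ : Set (V N)} (hσ : σ ∈ Y.topConesOver n τ) :
    X.minCone σ ∈ X.topConesOver n C ∧ coneSpan σ = coneSpan (X.minCone σ) ∧
      Y.weight σ = X.weight (X.minCone σ) := by
  obtain ⟨⟨hσY, hσd⟩, hτσ⟩ := (Y.mem_topConesOver hn hτ).mp hσ
  have hD := href.isMinConeOver_minCone hσY
  have hDd : coneDim (X.minCone σ) = n :=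
    (X.coneDim_le_of_isPure X.pure hD.1).antisymm (hσd.symm.trans_le (coneDim_mono hD.2.1))
  exact ⟨(X.mem_topConesOver hn ⟨hC.1, hCd⟩).mpr ⟨⟨hD.1, hDd⟩, hC.2.2 _ hD.1 (hτσ.trans hD.2.1)⟩,
    coneSpan_eq_of_subset hD.2.1 (by omega), href.2.2 σ ⟨hσY, hσd⟩ _ hD⟩

theorem injOn_minCone (hn : 1 ≤ n) (href : IsRefinement Y X)
    (hτ : τ ∈ Y.conesOfDim (n - 1)) (hC : IsMinConeOver X.toFan τ C) (hCd : coneDim C = n - 1) :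
    Set.InjOn X.minCone (Y.topConesOver n τ) := by
  intro σ₁ hσ₁ σ₂ hσ₂ heq
  obtain ⟨hD, hspan₁, -⟩ := href.minCone_mem_topConesOver hn hτ hC hCd hσ₁
  obtain ⟨-, hspan₂, -⟩ := href.minCone_mem_topConesOver hn hτ hC hCd hσ₂
  obtain ⟨c, -, hc0, hcpos⟩ := hD.2.1.exists_supporting_form
  have hτC : coneSpan τ = coneSpan C := coneSpan_eq_of_subset hC.2.1 (hCd.trans hτ.2.symm).le
  -- each `σᵢ` has dimension `n`, so it is not contained in the facet `C` of `minCone σᵢ`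
  have hpos : ∀ σ ∈ Y.topConesOver n τ, X.minCone σ = X.minCone σ₁ →
      ∃ x ∈ σ, 0 < evalFormLM c x := by
    intro σ hσ hσD
    obtain ⟨x, hx, hxC⟩ := exists_mem_notMem_coneSpan (σ := σ) (C := C) (by
      rw [hσ.1.2, hCd]; omega)
    exact ⟨x, hx, hcpos x (hσD ▸ (href.isMinConeOver_minCone hσ.1.1).2.1 hx)
      fun h => hxC (subset_coneSpan h)⟩
  obtain ⟨x₁, hx₁, hpos₁⟩ := hpos σ₁ hσ₁ rfl
  obtain ⟨x₂, hx₂, hpos₂⟩ := hpos σ₂ hσ₂ heq.symm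
  exact Y.eq_of_same_side hτ hσ₁ hσ₂ (by rw [hspan₂, ← heq, hspan₁]) (hτC ▸ hc0) hx₁ hx₂
    hpos₁ hpos₂

theorem surjOn_minCone (hn : 1 ≤ n) (href : IsRefinement Y X)
    (hτ : τ ∈ Y.conesOfDim (n - 1)) (hC : IsMinConeOver X.toFan τ C) (hCd : coneDim C = n - 1) :
    Set.SurjOn X.minCone (Y.topConesOver n τ) (X.topConesOver n C) := by
  intro σ hσ
  obtain ⟨⟨hσX, hσd⟩, hCσ⟩ := (X.mem_topConesOver hn ⟨hC.1, hCd⟩).mp hσ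
  obtain ⟨x, hx, hxC⟩ := exists_mem_notMem_coneSpan (σ := σ) (C := C) (by omega)
  obtain ⟨p, hp⟩ := (Y.isCone τ hτ.1).exists_isGenericPoint
  have hpx : ∀ ε : ℝ, 0 ≤ ε → p + ε • x ∈ σ := fun ε hε =>
    (X.isCone σ hσX).add_smul_mem (hCσ (hC.2.1 hp.1)) hx hε
  obtain ⟨ε, hε, σ', hσ', hτσ', hqσ'⟩ := Y.exists_add_smul_mem_conesOfDim Y.pure hτ.1 hp
    fun ε hε => href.mem_support hσX (hpx ε hε.le)
  have hD := href.isMinConeOver_minCone hσ'.1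
  have hqC : p + ε • x ∉ coneSpan C := fun hmem =>
    hxC <| (Submodule.smul_mem_iff _ hε.ne').mp <|
      (Submodule.add_mem_iff_right _ (subset_coneSpan (hC.2.1 hp.1))).mp hmem
  have hσD : σ = X.minCone σ' := X.eq_of_mem_of_notMem_coneSpan hσX hD.1 (by omega)
    (by have := X.coneDim_le_of_isPure X.pure hD.1; omega) hCσ
    (hC.2.2 _ hD.1 (hτσ'.trans hD.2.1)) (hpx ε hε.le) (hD.2.1 hqσ') hqC
  exact ⟨σ', (Y.mem_topConesOver hn hτ).mpr ⟨hσ', hτσ'⟩, hσD.symm⟩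

theorem bijOn_minCone (hn : 1 ≤ n) (href : IsRefinement Y X)
    (hτ : τ ∈ Y.conesOfDim (n - 1)) (hC : IsMinConeOver X.toFan τ C) (hCd : coneDim C = n - 1) :
    Set.BijOn X.minCone (Y.topConesOver n τ) (X.topConesOver n C) :=
  ⟨fun _ hσ => (href.minCone_mem_topConesOver hn hτ hC hCd hσ).1,
    href.injOn_minCone hn hτ hC hCd, href.surjOn_minCone hn hτ hC hCd⟩

theorem isBalancedAt_of_isBalancedAt_minCone (hn : 1 ≤ n) (href : IsRefinement Y X)
    (hτ : τ ∈ Y.conesOfDim (n - 1)) (hC : IsMinConeOver X.toFan τ C) (hCd : coneDim C = n - 1)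
    (hX : IsBalancedAt X.toFan n X.weight C) : IsBalancedAt Y.toFan n Y.weight τ := by
  intro u hu
  have hbij := href.bijOn_minCone hn hτ hC hCd
  have hτC : coneSpan τ = coneSpan C := coneSpan_eq_of_subset hC.2.1 (hCd.trans hτ.2.symm).le
  set v : Set (V N) → V N := fun D => u (Function.invFunOn X.minCone (Y.topConesOver n τ) D)
  have hvu : ∀ σ ∈ Y.topConesOver n τ, v (X.minCone σ) = u σ := fun σ hσ =>
    congrArg u (hbij.injOn.leftInvOn_invFunOn hσ)
  have hv : ∀ D ∈ X.topConesOver n C, IsNormalVector C D (v D) := by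
    rintro _ hD
    obtain ⟨σ, hσ, rfl⟩ := hbij.surjOn hD
    obtain ⟨-, hspan, -⟩ := href.minCone_mem_topConesOver hn hτ hC hCd hσ
    obtain ⟨c, hc, hc0, hcpos⟩ := hD.2.1.exists_supporting_form
    obtain ⟨x, hx, hxC⟩ := exists_mem_notMem_coneSpan (σ := σ) (C := C) (by
      rw [hσ.1.2, hCd]; omega)
    have hσD := (href.isMinConeOver_minCone hσ.1.1).2.1
    have hcu : 0 < evalFormLM c (u σ) := (hu σ hσ).apply_pos hσ.2.1.subset
      (Y.coneDim_le_of_mem_topConesOver hτ hσ) (hτC ▸ hc0) hx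
      (hcpos x (hσD hx) fun h => hxC (subset_coneSpan h))
    rw [hvu σ hσ]
    exact (hu σ hσ).of_coneSpan_eq hτC hspan hc0 hc hcu
  have hsum : ∑ᶠ σ ∈ Y.topConesOver n τ, Y.weight σ • u σ =
      ∑ᶠ D ∈ X.topConesOver n C, X.weight D • v D :=
    finsum_mem_eq_of_bijOn X.minCone hbij fun σ hσ => by
      rw [(href.minCone_mem_topConesOver hn hτ hC hCd hσ).2.2, hvu σ hσ]
  rw [hsum, hτC]
  exact hX v hv

theorem isBalancedAt_minCone_of_isBalancedAt (hn : 1 ≤ n) (href : IsRefinement Y X)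
    (hτ : τ ∈ Y.conesOfDim (n - 1)) (hC : IsMinConeOver X.toFan τ C) (hCd : coneDim C = n - 1)
    (hY : IsBalancedAt Y.toFan n Y.weight τ) : IsBalancedAt X.toFan n X.weight C := by
  intro u hu
  have hbij := href.bijOn_minCone hn hτ hC hCd
  have hτC : coneSpan τ = coneSpan C := coneSpan_eq_of_subset hC.2.1 (hCd.trans hτ.2.symm).le
  have hv : ∀ σ ∈ Y.topConesOver n τ, IsNormalVector τ σ (u (X.minCone σ)) := by
    intro σ hσ
    obtain ⟨hD, hspan, -⟩ := href.minCone_mem_topConesOver hn hτ hC hCd hσ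
    obtain ⟨-, -, g, hg0, hg, hgu⟩ := hu _ hD
    exact (hu _ hD).of_coneSpan_eq hτC.symm hspan.symm (hτC ▸ hg0)
      (fun x hx => hg x ((href.isMinConeOver_minCone hσ.1.1).2.1 hx)) hgu
  have hsum : ∑ᶠ σ ∈ Y.topConesOver n τ, Y.weight σ • u (X.minCone σ) =
      ∑ᶠ D ∈ X.topConesOver n C, X.weight D • u D :=
    finsum_mem_eq_of_bijOn X.minCone hbij fun σ hσ => by
      rw [(href.minCone_mem_topConesOver hn hτ hC hCd hσ).2.2]
  rw [← hsum, ← hτC]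
  exact hY _ hv

theorem isMinConeOver_of_coneDim_eq (hn : 1 ≤ n) (href : IsRefinement Y X)
    (hτ : τ ∈ Y.conesOfDim (n - 1)) (hC : IsMinConeOver X.toFan τ C) (hCd : coneDim C = n)
    {σ : Set (V N)} (hσ : σ ∈ Y.topConesOver n τ) : IsMinConeOver X.toFan σ C := by
  obtain ⟨E, hE, hσE⟩ := href.1 σ hσ.1.1
  have hτσ := ((Y.mem_topConesOver hn hτ).mp hσ).2
  have hCE : C = E := X.eq_of_subset_of_coneDim_le hC.1 hE (hC.2.2 E hE (hτσ.trans hσE))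
    ((X.coneDim_le_of_isPure X.pure hE).trans hCd.ge)
  exact ⟨hC.1, hCE ▸ hσE, fun E' hE' hσE' => hC.2.2 E' hE' (hτσ.trans hσE')⟩

theorem exists_topConesOver_eq_pair (hn : 1 ≤ n) (href : IsRefinement Y X)
    (hτ : τ ∈ Y.conesOfDim (n - 1)) (hC : IsMinConeOver X.toFan τ C) (hCd : coneDim C = n) :
    ∃ (σ₀ σ₁ : Set (V N)) (h : V N →ₗ[ℝ] ℝ), Y.topConesOver n τ = {σ₀, σ₁} ∧
      (∀ x ∈ coneSpan τ, h x = 0) ∧ (∃ x ∈ σ₀, 0 < h x) ∧ ∃ x ∈ σ₁, h x < 0 := by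
  have hmin := fun σ (hσ : σ ∈ Y.topConesOver n τ) =>
    href.isMinConeOver_of_coneDim_eq hn hτ hC hCd hσ
  obtain ⟨σ₀, hσ₀, hτσ₀⟩ := Y.pure τ hτ.1
  have hσ₀' : σ₀ ∈ Y.topConesOver n τ := (Y.mem_topConesOver hn hτ).mpr ⟨hσ₀, hτσ₀⟩
  obtain ⟨c, hc, hc0, hcpos⟩ := hσ₀'.2.1.exists_supporting_form
  obtain ⟨x₀, hx₀, hx₀τ⟩ := exists_mem_notMem_coneSpan (σ := σ₀) (C := τ) (by
    rw [hσ₀.2, hτ.2]; omega)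
  have hpos₀ : 0 < evalFormLM c x₀ := hcpos x₀ hx₀ fun h => hx₀τ (subset_coneSpan h)
  -- by minimality of `C`, the supporting functional of `τ < σ₀` is negative somewhere on `C`
  obtain ⟨y, hyC, hyneg⟩ : ∃ y ∈ C, evalFormLM c y < 0 := by
    by_contra! hcon
    have hCc := hC.2.2 _ (X.faces_mem C hC.1 _ ((X.isCone C hC.1).isFace_sep hcon))
      fun x hx => ⟨hC.2.1 hx, hc0 x (subset_coneSpan hx)⟩
    exact hpos₀.ne' (hCc ((hmin σ₀ hσ₀').2.1 hx₀)).2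
  obtain ⟨p, hp⟩ := (Y.isCone τ hτ.1).exists_isGenericPoint
  obtain ⟨ε, hε, σ₁, hσ₁, hτσ₁, hq⟩ := Y.exists_add_smul_mem_conesOfDim Y.pure hτ.1 hp fun ε hε =>
    href.mem_support hC.1 ((X.isCone C hC.1).add_smul_mem (hC.2.1 hp.1) hyC hε.le)
  have hσ₁' : σ₁ ∈ Y.topConesOver n τ := (Y.mem_topConesOver hn hτ).mpr ⟨hσ₁, hτσ₁⟩
  have hqneg : evalFormLM c (p + ε • y) < 0 := by
    rw [map_add, map_smul, hc0 p (subset_coneSpan hp.1), smul_eq_mul, zero_add]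
    exact mul_neg_of_pos_of_neg hε hyneg
  refine ⟨σ₀, σ₁, evalFormLM c, Set.Subset.antisymm (fun σ hσ => ?_) ?_, hc0, ⟨x₀, hx₀, hpos₀⟩,
    _, hq, hqneg⟩
  · have hspan : ∀ σ' ∈ Y.topConesOver n τ, coneSpan σ' = coneSpan C := fun σ' hσ' =>
      coneSpan_eq_of_subset (hmin σ' hσ').2.1 (hCd.trans hσ'.1.2.symm).le
    obtain ⟨x, hx, hxne⟩ : ∃ x ∈ σ, evalFormLM c x ≠ 0 := by
      by_contra! hcon
      exact hyneg.ne (eq_zero_of_mem_coneSpan hcon ((hspan σ hσ).ge (subset_coneSpan hyC)))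
    rcases hxne.lt_or_gt with hneg | hpos
    · refine Or.inr (Y.eq_of_same_side hτ hσ₁' hσ (by rw [hspan σ hσ, hspan σ₁ hσ₁'])
        (h := -evalFormLM c)
        (fun x hx => neg_eq_zero.mpr (hc0 x hx)) hq hx (neg_pos.mpr hqneg) (neg_pos.mpr hneg)).symm
    · exact Or.inl (Y.eq_of_same_side hτ hσ₀' hσ (by rw [hspan σ hσ, hspan σ₀ hσ₀']) hc0 hx₀
        hx hpos₀ hpos).symm
  · rintro σ (rfl | rfl)
    exacts [hσ₀', hσ₁']

theorem isBalancedAt_of_coneDim_eq (hn : 1 ≤ n) (href : IsRefinement Y X)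
    (hτ : τ ∈ Y.conesOfDim (n - 1)) (hC : IsMinConeOver X.toFan τ C) (hCd : coneDim C = n) :
    IsBalancedAt Y.toFan n Y.weight τ := by
  intro u hu
  obtain ⟨σ₀, σ₁, h, htops, hh, ⟨x₀, hx₀, hpos⟩, ⟨x₁, hx₁, hneg⟩⟩ :=
    href.exists_topConesOver_eq_pair hn hτ hC hCd
  have hσ₀ : σ₀ ∈ Y.topConesOver n τ := htops ▸ Set.mem_insert _ _
  have hσ₁ : σ₁ ∈ Y.topConesOver n τ := htops ▸ Set.mem_insert_of_mem _ rfl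
  have hmin := fun σ (hσ : σ ∈ Y.topConesOver n τ) =>
    href.isMinConeOver_of_coneDim_eq hn hτ hC hCd hσ
  have hu₀ : 0 < h (u σ₀) := (hu σ₀ hσ₀).apply_pos hσ₀.2.1.subset
    (Y.coneDim_le_of_mem_topConesOver hτ hσ₀) hh hx₀ hpos
  have hu₁ : h (u σ₁) < 0 := by
    simpa using (hu σ₁ hσ₁).apply_pos hσ₁.2.1.subset
      (Y.coneDim_le_of_mem_topConesOver hτ hσ₁) (h := -h)
      (fun x hx => neg_eq_zero.mpr (hh x hx)) hx₁ (neg_pos.mpr hneg)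
  have hne : σ₀ ≠ σ₁ := by
    rintro rfl
    exact hu₀.not_gt hu₁
  have hspan : coneSpan σ₀ = coneSpan σ₁ := by
    rw [coneSpan_eq_of_subset (hmin σ₀ hσ₀).2.1 (hCd.trans hσ₀.1.2.symm).le,
      coneSpan_eq_of_subset (hmin σ₁ hσ₁).2.1 (hCd.trans hσ₁.1.2.symm).le]
  rw [htops, finsum_mem_pair hne, href.2.2 σ₀ hσ₀.1 C (hmin σ₀ hσ₀),
    href.2.2 σ₁ hσ₁.1 C (hmin σ₁ hσ₁), ← smul_add]
  exact Submodule.smul_of_tower_mem _ _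
    ((hu σ₀ hσ₀).add_mem_coneSpan (hu σ₁ hσ₁) hspan hh hu₀ hu₁)

theorem exists_coneSpan_le_inter (href : IsRefinement Y X) (hτ : τ ∈ X.cones) :
    ∃ Z ∈ Y.cones, coneSpan τ ≤ coneSpan (Z ∩ τ) := by
  obtain ⟨k, v, hvτ, hspan⟩ := exists_fin_span_eq (K := ℝ) τ
  set bad := {Z | Z ∈ Y.cones ∧ ¬ coneSpan τ ≤ coneSpan (Z ∩ τ)}
  have hfin : ∀ Z ∈ bad,
      {t : ℝ | ∑ i : Fin k, t ^ ((i : ℕ) + 1) • v i ∈ coneSpan (Z ∩ τ)}.Finite := by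
    intro Z hZ
    obtain ⟨i, hi⟩ : ∃ i, v i ∉ coneSpan (Z ∩ τ) := by
      by_contra! h
      refine hZ.2 ?_
      rw [coneSpan, ← hspan]
      exact Submodule.span_le.mpr (Set.range_subset_iff.mpr h)
    exact finite_setOf_sum_pow_smul_mem v hi
  obtain ⟨t, ht, htbad⟩ :=
    ((Set.Ioi_infinite 0).sdiff ((Y.finite.subset fun _ h => h.1).biUnion hfin)).nonempty
  have hxτ : ∑ i : Fin k, t ^ ((i : ℕ) + 1) • v i ∈ τ :=
    (X.isCone τ hτ).sum_smul_mem _ (fun i => (pow_pos ht _).le) hvτ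
  obtain ⟨Z, hZ, hxZ⟩ : ∃ Z ∈ Y.cones, ∑ i : Fin k, t ^ ((i : ℕ) + 1) • v i ∈ Z := by
    simpa [Fan.support] using href.mem_support hτ hxτ
  refine ⟨Z, hZ, ?_⟩
  by_contra hbad
  exact htbad (Set.mem_biUnion ⟨hZ, hbad⟩ (subset_coneSpan ⟨hxZ, hxτ⟩))

theorem exists_isMinConeOver_coneSpan_eq (href : IsRefinement Y X) (hτ : τ ∈ X.cones) :
    ∃ τ' ∈ Y.cones, coneSpan τ' = coneSpan τ ∧ IsMinConeOver X.toFan τ' τ := by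
  obtain ⟨Z, hZ, hZτ⟩ := href.exists_coneSpan_le_inter hτ
  obtain ⟨E, hE, hZE⟩ := href.1 Z hZ
  have hτE : τ ⊆ E := X.subset_of_coneSpan_le hτ hE Set.inter_subset_right
    (Set.inter_subset_left.trans hZE) hZτ
  obtain ⟨c, hc, hc0, hcpos⟩ := (X.isFace_of_subset hτ hE hτE).exists_supporting_form
  have hτ' := Y.faces_mem Z hZ _ ((Y.isCone Z hZ).isFace_sep fun x hx => hc x (hZE hx))
  have hτ'τ : {x ∈ Z | evalForm c x = 0} ⊆ τ := fun x hx => by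
    by_contra hxτ
    exact (hcpos x (hZE hx.1) hxτ).ne' hx.2
  have hspan : coneSpan {x ∈ Z | evalForm c x = 0} = coneSpan τ :=
    (coneSpan_mono hτ'τ).antisymm
      (hZτ.trans (coneSpan_mono fun x hx => ⟨hx.1, hc0 x (subset_coneSpan hx.2)⟩))
  exact ⟨_, hτ', hspan, X.isMinConeOver_of_coneSpan_le hτ hτ'τ hspan.ge⟩

theorem isTropical_of_coarse (href : IsRefinement Y X) (hX : X.IsTropical) : Y.IsTropical := by
  rcases Nat.eq_zero_or_pos n with rfl | hn
  · exact isBalanced_zero _ _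
  refine isBalanced_iff.mpr fun τ hτ => ?_
  obtain ⟨C, hC⟩ := X.exists_isMinConeOver (href.1 τ hτ.1)
  have hτC := coneDim_mono hC.2.1
  have hCn := X.coneDim_le_of_isPure X.pure hC.1
  rcases (by rw [hτ.2] at hτC; omega : coneDim C = n - 1 ∨ coneDim C = n) with hCd | hCd
  · exact href.isBalancedAt_of_isBalancedAt_minCone hn hτ hC hCd
      (isBalanced_iff.mp hX C ⟨hC.1, hCd⟩)
  · exact href.isBalancedAt_of_coneDim_eq hn hτ hC hCd

theorem isTropical_coarse (href : IsRefinement Y X) (hY : Y.IsTropical) : X.IsTropical := by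
  rcases Nat.eq_zero_or_pos n with rfl | hn
  · exact isBalanced_zero _ _
  refine isBalanced_iff.mpr fun τ hτ => ?_
  obtain ⟨τ', hτ', hspan, hmin⟩ := href.exists_isMinConeOver_coneSpan_eq hτ.1
  have hτ'd : τ' ∈ Y.conesOfDim (n - 1) := ⟨hτ', by rw [coneDim, hspan]; exact hτ.2⟩
  exact href.isBalancedAt_minCone_of_isBalancedAt hn hτ'd hmin hτ.2
    (isBalanced_iff.mp hY τ' hτ'd)

theorem isTropical_iff (href : IsRefinement Y X) : Y.IsTropical ↔ X.IsTropical :=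
  ⟨href.isTropical_coarse, href.isTropical_of_coarse⟩

end IsRefinement

/-- Let `(Y, ω_Y)` be a refinement of a weighted fan `(X, ω_X)`
of dimension `n` in `V`. Then `(Y, ω_Y)` is a tropical fan if and only if
`(X, ω_X)` is a tropical fan. Consequently, the property of being tropical is
well-defined on equivalence classes of weighted fans (weighted fans with a
common refinement are tropical simultaneously). -/
theorem stmt_2 (N n : ℕ) :
    (∀ X Y : WeightedFan N n, IsRefinement Y X → (Y.IsTropical ↔ X.IsTropical)) ∧
    (∀ X₁ X₂ Z : WeightedFan N n, IsRefinement Z X₁ → IsRefinement Z X₂ →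
      (X₁.IsTropical ↔ X₂.IsTropical)) :=
  ⟨fun _ _ href => href.isTropical_iff, fun _ _ _ h₁ h₂ => h₁.isTropical_iff.symm.trans
    h₂.isTropical_iff⟩

end TropFan
end

section
/- Let u_1, …, u_n be a basis of the lattice ℤ^n and u_0 := −u_1 − ⋯ − u_n. For I ⊊ {0, …, n} let σ_I be the simplicial cone in ℝ^n spanned by {u_i : i ∈ I}, and for 0 ≤ k ≤ n let L_k^n := {σ_I : |I| ≤ k}. Then L_k^n is a simplicial fan of pure dimension k in ℝ^n, and with the markings v_{σ_{{i}}} := u_i (hence all weights equal to 1) it is a tropical fan, i.e. for every τ ∈ (L_k^n)^{(k−1)} the balancing condition Σ_{σ > τ} v_{σ/τ} = 0 holds in ℝ^n/V_τ. -/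
open scoped BigOperators

namespace TropFan

/-!
Any `n` of the vectors `u_0, …, u_n` form a basis of `ℤ^n`, and their only linear relation is
`∑ i, u_i = 0`, whose coefficients are all positive. For a proper `I` and `j ∉ I`, the cone
`σ_I` is a coordinate face of the positive orthant of the lattice basis `(u_i)_{i ≠ j}`; hence it
is a rational simplicial cone whose faces are the `σ_J` with `J ⊆ I`, and `Λ_{σ_I}` is generated
by the `u_i` with `i ∈ I`, so all weights are `1`. Uniqueness of nonnegative coefficients gives
`σ_I ∩ σ_{I'} = σ_{I ∩ I'}`. The maximal cones above `τ = σ_J` are the `σ_{J ∪ {i}}`, `i ∉ J`,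
each with normal vector `u_i` modulo `V_τ`, and `∑_{i ∉ J} u_i = -∑_{i ∈ J} u_i ∈ V_τ`.
-/

section Lattice

variable {n : ℕ}

lemma single_mem_latticePts (i : Fin n) : (Pi.single i 1 : V n) ∈ latticePts n := fun j =>
  ⟨(Pi.single i 1 : Fin n → ℤ) j, by rcases eq_or_ne j i with rfl | h <;> simp [*]⟩

lemma span_eq_top_of_closure_eq_latticePts {S : Set (V n)}
    (hS : AddSubgroup.closure S = latticePts n) : Submodule.span ℝ S = ⊤ := by
  refine eq_top_iff.2 ((Pi.basisFun ℝ (Fin n)).span_eq.symm.le.trans (Submodule.span_le.2 ?_))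
  rintro _ ⟨i, rfl⟩
  have hi : Pi.basisFun ℝ (Fin n) i ∈ AddSubgroup.closure S := by
    rw [hS, Pi.basisFun_apply]; exact single_mem_latticePts i
  exact (AddSubgroup.closure_le (K := (Submodule.span ℝ S).toAddSubgroup)).2
    Submodule.subset_span hi

lemma exists_int_of_closure_eq_latticePts {S : Set (V n)}
    (hS : AddSubgroup.closure S = latticePts n) (g : V n →ₗ[ℝ] ℝ)
    (hg : ∀ x ∈ S, ∃ z : ℤ, g x = z) : ∀ x ∈ latticePts n, ∃ z : ℤ, g x = z := by
  have hle : AddSubgroup.closure S ≤ (Int.castAddHom ℝ).range.comap g.toAddMonoidHom :=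
    (AddSubgroup.closure_le _).2 fun x hx => by
      obtain ⟨z, hz⟩ := hg x hx
      exact ⟨z, hz.symm⟩
  rw [← hS]
  intro x hx
  obtain ⟨z, hz⟩ := hle hx
  exact ⟨z, hz.symm⟩

lemma exists_evalForm_eq (g : V n →ₗ[ℝ] ℝ) (hg : ∀ x ∈ latticePts n, ∃ z : ℤ, g x = z) :
    ∃ c : Fin n → ℤ, ∀ x, evalForm c x = g x := by
  choose c hc using fun i => hg _ (single_mem_latticePts i)
  refine ⟨c, fun x => ?_⟩
  have hsingle (i : Fin n) : (fun j => if i = j then (1 : ℝ) else 0) = Pi.single i 1 := by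
    ext j; simp [Pi.single_apply, eq_comm]
  simp only [LinearMap.pi_apply_eq_sum_univ g x, evalForm, smul_eq_mul, hsingle, hc, mul_comm]

lemma evalForm_sum {ι : Type*} (c : ι → Fin n → ℤ) (s : Finset ι) (x : V n) :
    evalForm (∑ m ∈ s, c m) x = ∑ m ∈ s, evalForm (c m) x := by
  simp only [evalForm, Finset.sum_apply, Int.cast_sum, Finset.sum_mul]
  exact Finset.sum_comm

lemma evalForm_sum_smul {ι : Type*} [Fintype ι] (c : Fin n → ℤ) (d : ι → ℝ) (v : ι → V n) :
    evalForm c (∑ i, d i • v i) = ∑ i, d i * evalForm c (v i) := by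
  simp only [evalForm, Finset.sum_apply, Pi.smul_apply, smul_eq_mul, Finset.mul_sum]
  rw [Finset.sum_comm]
  exact Finset.sum_congr rfl fun _ _ => Finset.sum_congr rfl fun _ _ => by ring

end Lattice

section CoordinateCones

variable {n : ℕ}

/-- The face of the positive orthant of `B` spanned by the basis vectors indexed by `M`. -/
def coordCone (B : Module.Basis (Fin n) ℝ (V n)) (M : Finset (Fin n)) : Set (V n) :=
  {x | ∀ m, 0 ≤ B.repr x m ∧ (m ∉ M → B.repr x m = 0)}

variable {B : Module.Basis (Fin n) ℝ (V n)}
  (hB : ∀ m, ∀ x ∈ latticePts n, ∃ z : ℤ, B.coord m x = z)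
include hB

lemma isCone_coordCone (M : Finset (Fin n)) : IsCone (coordCone B M) := by
  classical
  choose c hc using fun m => exists_evalForm_eq (B.coord m) (hB m)
  refine ⟨n, n, fun m => if m ∈ M then 0 else c m, c, ?_⟩
  ext x
  simp only [coordCone, Set.mem_ofPred_eq, hc, Module.Basis.coord_apply]
  refine ⟨fun hx => ⟨fun m => ?_, fun m => (hx m).1⟩, fun hx m => ⟨hx.2 m, fun hm => ?_⟩⟩
  · split_ifs with hm
    · simp [evalForm]
    · rw [hc]; exact (hx m).2 hm
  · simpa [hm, hc] using hx.1 m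

lemma isFace_coordCone {M' M : Finset (Fin n)} (h : M' ⊆ M) :
    IsFace (coordCone B M') (coordCone B M) := by
  classical
  choose c hc using fun m => exists_evalForm_eq (B.coord m) (hB m)
  have hsum (x : V n) : evalForm (∑ m ∈ M \ M', c m) x = ∑ m ∈ M \ M', B.repr x m := by
    simp only [evalForm_sum, hc, Module.Basis.coord_apply]
  refine ⟨isCone_coordCone hB M', isCone_coordCone hB M,
    fun x hx m => ⟨(hx m).1, fun hm => (hx m).2 fun hm' => hm (h hm')⟩,
    ∑ m ∈ M \ M', c m, fun x hx => ?_, ?_⟩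
  · rw [hsum]; exact Finset.sum_nonneg fun m _ => (hx m).1
  · ext x
    simp only [coordCone, Set.mem_ofPred_eq, hsum]
    constructor
    · intro hx
      refine ⟨fun m => ⟨(hx m).1, fun hm => (hx m).2 fun hm' => hm (h hm')⟩,
        Finset.sum_eq_zero fun m hm => (hx m).2 (Finset.mem_sdiff.1 hm).2⟩
    · rintro ⟨hx, hzero⟩ m
      refine ⟨(hx m).1, fun hm' => ?_⟩
      by_cases hm : m ∈ M
      · exact (Finset.sum_eq_zero_iff_of_nonneg fun m _ => (hx m).1).1 hzero m
          (Finset.mem_sdiff.2 ⟨hm, hm'⟩)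
      · exact (hx m).2 hm

lemma mem_closure_image_of_mem_span {M : Set (Fin n)} {x : V n}
    (hx : x ∈ Submodule.span ℝ (B '' M)) (hxL : x ∈ latticePts n) :
    x ∈ AddSubgroup.closure (B '' M) := by
  rw [← B.sum_repr x]
  refine AddSubgroup.sum_mem _ fun m _ => ?_
  by_cases hm : m ∈ M
  · obtain ⟨z, hz⟩ := hB m x hxL
    rw [← B.coord_apply, hz, Int.cast_smul_eq_zsmul]
    exact AddSubgroup.zsmul_mem _ (AddSubgroup.subset_closure (Set.mem_image_of_mem B hm)) _
  · rw [Finsupp.notMem_support_iff.1 fun hm' => hm (B.mem_span_image.1 hx hm'), zero_smul]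
    exact zero_mem _

end CoordinateCones

section SpannedCones

variable {n : ℕ} (uu : Fin (n + 1) → V n)

def sigmaCone (I : Finset (Fin (n + 1))) : Set (V n) :=
  {x | ∃ c : Fin (n + 1) → ℝ, (∀ i, 0 ≤ c i) ∧ (∀ i ∉ I, c i = 0) ∧ x = ∑ i, c i • uu i}

variable {uu}

lemma sigmaCone_mono {I I' : Finset (Fin (n + 1))} (h : I ⊆ I') :
    sigmaCone uu I ⊆ sigmaCone uu I' := by
  rintro x ⟨c, hc0, hcI, rfl⟩
  exact ⟨c, hc0, fun i hi => hcI i fun hiI => hi (h hiI), rfl⟩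

lemma mem_sigmaCone {I : Finset (Fin (n + 1))} {i : Fin (n + 1)} (hi : i ∈ I) :
    uu i ∈ sigmaCone uu I :=
  ⟨Pi.single i 1, fun j => by rcases eq_or_ne j i with rfl | h <;> simp [*],
    fun _ hj => Pi.single_eq_of_ne (ne_of_mem_of_not_mem hi hj).symm _, by simp⟩

lemma sigmaCone_empty : sigmaCone uu ∅ = {0} := by
  ext x
  constructor
  · rintro ⟨c, -, hc, rfl⟩
    simp [hc _ (Finset.notMem_empty _)]
  · rintro rfl
    exact ⟨0, fun _ => le_rfl, fun _ _ => rfl, by simp⟩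

lemma sigmaCone_singleton (i : Fin (n + 1)) :
    sigmaCone uu {i} = {x | ∃ c : ℝ, 0 ≤ c ∧ x = c • uu i} := by
  ext x
  constructor
  · rintro ⟨c, hc0, hci, rfl⟩
    refine ⟨c i, hc0 i, Finset.sum_eq_single i (fun j _ hj => ?_) (by simp)⟩
    rw [hci j (Finset.notMem_singleton.2 hj), zero_smul]
  · rintro ⟨c, hc0, rfl⟩
    refine ⟨Pi.single i c, fun j => ?_, fun j hj => ?_, by simp⟩
    · rcases eq_or_ne j i with rfl | h <;> simp [*]
    · exact Pi.single_eq_of_ne (Finset.notMem_singleton.1 hj) _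

lemma coneSpan_sigmaCone (I : Finset (Fin (n + 1))) :
    coneSpan (sigmaCone uu I) = Submodule.span ℝ (uu '' I) := by
  apply le_antisymm
  · rw [coneSpan, Submodule.span_le]
    rintro x ⟨c, -, hcI, rfl⟩
    refine Submodule.sum_mem _ fun i _ => ?_
    by_cases hi : i ∈ I
    · exact Submodule.smul_mem _ _ (Submodule.subset_span ⟨i, hi, rfl⟩)
    · simp [hcI i hi]
  · rw [Submodule.span_le]
    rintro _ ⟨i, hi, rfl⟩
    exact Submodule.subset_span (mem_sigmaCone hi)

/-- A supporting form cuts out of `σ_I` the cone spanned by the generators on which it vanishes. -/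
lemma exists_eq_sigmaCone_of_isFace {I : Finset (Fin (n + 1))} {τ : Set (V n)}
    (hτ : IsFace τ (sigmaCone uu I)) : ∃ J ⊆ I, τ = sigmaCone uu J := by
  classical
  obtain ⟨-, -, -, c, hc, rfl⟩ := hτ
  refine ⟨I.filter fun i => evalForm c (uu i) = 0, Finset.filter_subset _ _, ?_⟩
  ext x
  constructor
  · rintro ⟨⟨d, hd0, hdI, rfl⟩, hx⟩
    rw [evalForm_sum_smul] at hx
    have hterm (i : Fin (n + 1)) : 0 ≤ d i * evalForm c (uu i) := by
      by_cases hi : i ∈ I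
      · exact mul_nonneg (hd0 i) (hc _ (mem_sigmaCone hi))
      · simp [hdI i hi]
    refine ⟨d, hd0, fun i hi => ?_, rfl⟩
    by_cases hiI : i ∈ I
    · have hci : evalForm c (uu i) ≠ 0 := fun h => hi (Finset.mem_filter.2 ⟨hiI, h⟩)
      exact (mul_eq_zero.1 ((Finset.sum_eq_zero_iff_of_nonneg fun i _ => hterm i).1 hx i
        (Finset.mem_univ i))).resolve_right hci
    · exact hdI i hiI
  · rintro ⟨d, hd0, hdJ, rfl⟩
    refine ⟨sigmaCone_mono (Finset.filter_subset _ _) ⟨d, hd0, hdJ, rfl⟩, ?_⟩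
    rw [evalForm_sum_smul]
    refine Finset.sum_eq_zero fun i _ => ?_
    by_cases hi : i ∈ I.filter fun i => evalForm c (uu i) = 0
    · rw [(Finset.mem_filter.1 hi).2, mul_zero]
    · rw [hdJ i hi, zero_mul]

noncomputable def rayMark (uu : Fin (n + 1) → V n) : Set (V n) → V n :=
  Function.extend (fun i => sigmaCone uu {i}) uu 0

end SpannedCones

def Fan.facetsOver {N : ℕ} (X : Fan N) (k : ℕ) (τ : Set (V N)) : Set (Set (V N)) :=
  {σ | σ ∈ X.conesOfDim k ∧ IsFace τ σ ∧ τ ≠ σ}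

lemma ne_univ_of_card_le {n : ℕ} {I : Finset (Fin (n + 1))} (hI : I.card ≤ n) :
    I ≠ Finset.univ :=
  (Finset.card_lt_iff_ne_univ I).1 (by simpa using Nat.lt_succ_of_le hI)

/-- Every `n` of the vectors `uu i` form a basis of `ℤ^n` and their only relation is
`∑ i, uu i = 0`: the rays of the fan of projective space `ℙ^n`. -/
structure IsUnimodularCircuit {n : ℕ} (uu : Fin (n + 1) → V n) : Prop where
  closure_eq : AddSubgroup.closure (Set.range fun i : Fin n => uu i.succ) = latticePts n
  sum_eq_zero : ∑ i, uu i = 0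

namespace IsUnimodularCircuit

variable {n : ℕ} {uu : Fin (n + 1) → V n} (h : IsUnimodularCircuit uu)
include h

/-- `uu j` is minus the sum of the others, so it can be dropped from a generating set. -/
lemma closure_range_succAbove_eq_closure_range (j : Fin (n + 1)) :
    AddSubgroup.closure (Set.range fun m => uu (j.succAbove m)) =
      AddSubgroup.closure (Set.range uu) := by
  refine le_antisymm (AddSubgroup.closure_mono (Set.range_comp_subset_range _ uu)) ?_
  rw [AddSubgroup.closure_le]
  rintro _ ⟨i, rfl⟩
  rcases eq_or_ne i j with rfl | hij
  · have : uu i = -∑ m, uu (i.succAbove m) :=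
      eq_neg_of_add_eq_zero_left (by rw [← Fin.sum_univ_succAbove uu i, h.sum_eq_zero])
    rw [this]
    exact neg_mem (AddSubgroup.sum_mem _ fun m _ => AddSubgroup.subset_closure ⟨m, rfl⟩)
  · obtain ⟨m, rfl⟩ := Fin.exists_succAbove_eq hij
    exact AddSubgroup.subset_closure ⟨m, rfl⟩

lemma closure_range_eq : AddSubgroup.closure (Set.range uu) = latticePts n := by
  rw [← h.closure_range_succAbove_eq_closure_range 0, ← h.closure_eq, Fin.succAbove_zero]

lemma closure_range_succAbove_eq (j : Fin (n + 1)) :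
    AddSubgroup.closure (Set.range fun m => uu (j.succAbove m)) = latticePts n := by
  rw [h.closure_range_succAbove_eq_closure_range, h.closure_range_eq]

lemma mem_latticePts (i : Fin (n + 1)) : uu i ∈ latticePts n :=
  h.closure_range_eq ▸ AddSubgroup.subset_closure ⟨i, rfl⟩

noncomputable def basisOmit (j : Fin (n + 1)) : Module.Basis (Fin n) ℝ (V n) :=
  .mk (linearIndependent_of_top_le_span_of_card_eq_finrank
      (span_eq_top_of_closure_eq_latticePts (h.closure_range_succAbove_eq j)).ge (by simp))
    (span_eq_top_of_closure_eq_latticePts (h.closure_range_succAbove_eq j)).ge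

@[simp]
lemma basisOmit_apply (j : Fin (n + 1)) (m : Fin n) : h.basisOmit j m = uu (j.succAbove m) := by
  simp [basisOmit]

lemma coord_basisOmit_int (j : Fin (n + 1)) (m : Fin n) :
    ∀ x ∈ latticePts n, ∃ z : ℤ, (h.basisOmit j).coord m x = z := by
  refine exists_int_of_closure_eq_latticePts (h.closure_range_succAbove_eq j) _ ?_
  rintro _ ⟨m', rfl⟩
  dsimp only
  rw [← h.basisOmit_apply j m', Module.Basis.coord_apply, Module.Basis.repr_self]
  rcases eq_or_ne m' m with rfl | hm
  · exact ⟨1, by simp⟩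
  · exact ⟨0, by simp [hm]⟩

lemma linearIndepOn_compl_singleton (j : Fin (n + 1)) : LinearIndepOn ℝ uu {j}ᶜ := by
  rw [← Fin.range_succAbove, linearIndepOn_range_iff Fin.succAbove_right_injective]
  convert (h.basisOmit j).linearIndependent
  ext m
  simp

lemma ne_zero (hn : 0 < n) (i : Fin (n + 1)) : uu i ≠ 0 := by
  have : Nontrivial (Fin (n + 1)) := Fin.nontrivial_iff_two_le.2 (by omega)
  obtain ⟨j, hj⟩ := exists_ne i
  exact (h.linearIndepOn_compl_singleton j).ne_zero (Set.mem_compl_singleton_iff.2 hj.symm)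

lemma eq_of_sum_smul_eq_zero {d : Fin (n + 1) → ℝ} (hd : ∑ i, d i • uu i = 0) (i j : Fin (n + 1)) :
    d i = d j := by
  have hrel : ∑ m, (d (j.succAbove m) - d j) • h.basisOmit j m = 0 := by
    have : ∑ i, (d i - d j) • uu i = 0 := by
      simp only [sub_smul, Finset.sum_sub_distrib, hd, ← Finset.smul_sum, h.sum_eq_zero,
        smul_zero, sub_zero]
    simpa [Fin.sum_univ_succAbove _ j] using this
  rcases eq_or_ne i j with rfl | hij
  · rfl
  · obtain ⟨m, rfl⟩ := Fin.exists_succAbove_eq hij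
    exact sub_eq_zero.1 (Fintype.linearIndependent_iff.1 (h.basisOmit j).linearIndependent _ hrel m)

lemma sigmaCone_eq_coordCone {I : Finset (Fin (n + 1))} {j : Fin (n + 1)} (hj : j ∉ I) :
    sigmaCone uu I = coordCone (h.basisOmit j) (Finset.univ.filter fun m => j.succAbove m ∈ I) := by
  set B := h.basisOmit j
  have hsum (c : Fin (n + 1) → ℝ) (hcj : c j = 0) :
      ∑ i, c i • uu i = ∑ m, c (j.succAbove m) • B m := by
    simp [Fin.sum_univ_succAbove _ j, hcj, B]
  ext x
  constructor
  · rintro ⟨c, hc0, hcI, rfl⟩ m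
    rw [hsum c (hcI j hj), B.repr_sum_self]
    exact ⟨hc0 _, fun hm => hcI _ (by simpa using hm)⟩
  · intro hx
    refine ⟨j.insertNth 0 (B.repr x), fun i => ?_, fun i hi => ?_, ?_⟩
    · induction i using j.succAboveCases <;> simp [(hx _).1]
    · induction i using j.succAboveCases
      · simp
      · simpa using (hx _).2 (by simpa using hi)
    · rw [hsum _ (by simp)]
      simp only [Fin.insertNth_apply_succAbove, B.sum_repr]

lemma isCone_sigmaCone {I : Finset (Fin (n + 1))} (hI : I ≠ Finset.univ) :
    IsCone (sigmaCone uu I) := by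
  obtain ⟨j, hj⟩ : ∃ j, j ∉ I := by simpa [Finset.eq_univ_iff_forall] using hI
  rw [h.sigmaCone_eq_coordCone hj]
  exact isCone_coordCone (h.coord_basisOmit_int j) _

lemma isFace_sigmaCone {J I : Finset (Fin (n + 1))} (hJI : J ⊆ I) (hI : I ≠ Finset.univ) :
    IsFace (sigmaCone uu J) (sigmaCone uu I) := by
  obtain ⟨j, hj⟩ : ∃ j, j ∉ I := by simpa [Finset.eq_univ_iff_forall] using hI
  rw [h.sigmaCone_eq_coordCone hj, h.sigmaCone_eq_coordCone fun hjJ => hj (hJI hjJ)]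
  exact isFace_coordCone (h.coord_basisOmit_int j)
    (Finset.monotone_filter_right _ fun _ _ hm => hJI hm)

lemma linearIndepOn_of_notMem {I : Finset (Fin (n + 1))} {j : Fin (n + 1)} (hj : j ∉ I) :
    LinearIndepOn ℝ uu I :=
  (h.linearIndepOn_compl_singleton j).mono fun _ hi hij => hj (hij ▸ hi)

lemma image_eq_basisOmit_image {I : Finset (Fin (n + 1))} {j : Fin (n + 1)} (hj : j ∉ I) :
    uu '' I = h.basisOmit j '' {m | j.succAbove m ∈ I} := by
  ext x
  constructor
  · rintro ⟨i, hi, rfl⟩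
    obtain ⟨m, rfl⟩ := Fin.exists_succAbove_eq (ne_of_mem_of_not_mem hi hj)
    exact ⟨m, hi, by simp⟩
  · rintro ⟨m, hm, rfl⟩
    exact ⟨_, hm, by simp⟩

lemma coneDim_sigmaCone {I : Finset (Fin (n + 1))} (hI : I ≠ Finset.univ) :
    coneDim (sigmaCone uu I) = I.card := by
  obtain ⟨j, hj⟩ : ∃ j, j ∉ I := by simpa [Finset.eq_univ_iff_forall] using hI
  rw [coneDim, coneSpan_sigmaCone, Set.image_eq_range,
    finrank_span_eq_card (h.linearIndepOn_of_notMem hj).linearIndependent]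
  simp

lemma coneLattice_sigmaCone {I : Finset (Fin (n + 1))} (hI : I ≠ Finset.univ) :
    coneLattice (sigmaCone uu I) = AddSubgroup.closure (uu '' I) := by
  obtain ⟨j, hj⟩ : ∃ j, j ∉ I := by simpa [Finset.eq_univ_iff_forall] using hI
  apply le_antisymm
  · intro x hx
    obtain ⟨hxV, hxL⟩ := AddSubgroup.mem_inf.1 hx
    rw [Submodule.mem_toAddSubgroup, coneSpan_sigmaCone, h.image_eq_basisOmit_image hj] at hxV
    rw [h.image_eq_basisOmit_image hj]
    exact mem_closure_image_of_mem_span (h.coord_basisOmit_int j) hxV hxL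
  · rw [AddSubgroup.closure_le]
    rintro _ ⟨i, hi, rfl⟩
    exact ⟨Submodule.subset_span (mem_sigmaCone hi), h.mem_latticePts i⟩

lemma isSimplicialCone_sigmaCone {I : Finset (Fin (n + 1))} (hI : I ≠ Finset.univ) :
    IsSimplicialCone (sigmaCone uu I) := by
  obtain ⟨j, hj⟩ : ∃ j, j ∉ I := by simpa [Finset.eq_univ_iff_forall] using hI
  set e := I.equivFin
  have hsum (c : Fin (n + 1) → ℝ) (hc : ∀ i ∉ I, c i = 0) :
      ∑ i, c i • uu i = ∑ m, c (e.symm m) • uu (e.symm m) := by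
    rw [← Finset.sum_subset (Finset.subset_univ I) fun i _ hi => by simp [hc i hi],
      ← Finset.sum_coe_sort I, ← e.symm.sum_comp]
  refine ⟨I.card, fun m => uu (e.symm m), ?_, fun m => h.mem_latticePts _, ?_⟩
  · exact (h.linearIndepOn_of_notMem hj).linearIndependent.comp _ e.symm.injective
  ext x
  constructor
  · rintro ⟨c, hc0, hcI, rfl⟩
    exact ⟨fun m => c (e.symm m), fun m => hc0 _, hsum c hcI⟩
  · rintro ⟨c, hc0, rfl⟩
    refine ⟨fun i => if hi : i ∈ I then c (e ⟨i, hi⟩) else 0, fun i => ?_,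
      fun i hi => dif_neg hi, ?_⟩
    · dsimp only
      split_ifs
      exacts [hc0 _, le_rfl]
    · rw [hsum _ fun i hi => dif_neg hi]
      simp

/-- The only relation `∑ i, uu i = 0` has positive coefficients, so it cannot relate two
nonnegative coefficient vectors that both vanish somewhere. -/
lemma coeff_eq_of_sum_smul_eq {c c' : Fin (n + 1) → ℝ} (hc : ∀ i, 0 ≤ c i) (hc' : ∀ i, 0 ≤ c' i)
    {j j' : Fin (n + 1)} (hj : c j = 0) (hj' : c' j' = 0)
    (heq : ∑ i, c i • uu i = ∑ i, c' i • uu i) : c = c' := by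
  have hd : ∑ i, (c i - c' i) • uu i = 0 := by
    simp [sub_smul, Finset.sum_sub_distrib, heq]
  funext i
  have := h.eq_of_sum_smul_eq_zero hd i j
  have := h.eq_of_sum_smul_eq_zero hd j' j
  linarith [hc j', hc' j]

lemma sigmaCone_inter {I I' : Finset (Fin (n + 1))} (hI : I ≠ Finset.univ)
    (hI' : I' ≠ Finset.univ) : sigmaCone uu I ∩ sigmaCone uu I' = sigmaCone uu (I ∩ I') := by
  obtain ⟨j, hj⟩ : ∃ j, j ∉ I := by simpa [Finset.eq_univ_iff_forall] using hI
  obtain ⟨j', hj'⟩ : ∃ j, j ∉ I' := by simpa [Finset.eq_univ_iff_forall] using hI'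
  refine subset_antisymm ?_ fun x hx =>
    ⟨sigmaCone_mono Finset.inter_subset_left hx, sigmaCone_mono Finset.inter_subset_right hx⟩
  rintro x ⟨⟨c, hc0, hcI, rfl⟩, ⟨c', hc0', hcI', hx⟩⟩
  obtain rfl := h.coeff_eq_of_sum_smul_eq hc0 hc0' (hcI j hj) (hcI' j' hj') hx
  refine ⟨c, hc0, fun i hi => ?_, rfl⟩
  rcases not_and_or.1 (Finset.mem_inter.not.1 hi) with hi | hi
  exacts [hcI i hi, hcI' i hi]

lemma mem_of_mem_sigmaCone (hn : 0 < n) {I : Finset (Fin (n + 1))} {i : Fin (n + 1)}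
    (hi : uu i ∈ sigmaCone uu I) : i ∈ I := by
  by_contra hiI
  have hI : I ≠ Finset.univ := fun hI => hiI (hI ▸ Finset.mem_univ i)
  have hi' : ({i} : Finset (Fin (n + 1))) ≠ Finset.univ :=
    ne_univ_of_card_le ((Finset.card_singleton i).trans_le hn)
  have : uu i ∈ sigmaCone uu (I ∩ {i}) :=
    h.sigmaCone_inter hI hi' ▸ ⟨hi, mem_sigmaCone (Finset.mem_singleton_self i)⟩
  rw [Finset.inter_singleton_of_notMem hiI, sigmaCone_empty] at this
  exact h.ne_zero hn i this

/-- The coordinate `φ` of `uu i` in a basis `basisOmit j` is an integral form that is `1` on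
`uu i` and vanishes on `V_τ`. A normal vector `u` has `u ≡ φ u • uu i` modulo `V_τ`; the generation
condition gives `k * φ u = 1` for some integer `k`, and the sign condition gives `φ u ≥ 0`. -/
lemma sub_mem_span_of_isNormalVector {J : Finset (Fin (n + 1))} {i : Fin (n + 1)} (hiJ : i ∉ J)
    (hI : insert i J ≠ Finset.univ) {u : V n}
    (hu : IsNormalVector (sigmaCone uu J) (sigmaCone uu (insert i J)) u) :
    u - uu i ∈ Submodule.span ℝ (uu '' J) := by
  obtain ⟨j, hj⟩ : ∃ j, j ∉ insert i J := by simpa [Finset.eq_univ_iff_forall] using hI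
  obtain ⟨m, rfl⟩ :=
    Fin.exists_succAbove_eq (ne_of_mem_of_not_mem (Finset.mem_insert_self _ J) hj)
  set φ := (h.basisOmit j).coord m
  have hφi : φ (uu (j.succAbove m)) = 1 := by
    rw [← h.basisOmit_apply]
    simp only [φ, Module.Basis.coord_apply, Module.Basis.repr_self, Finsupp.single_eq_same]
  have hφJ (y : V n) (hy : y ∈ Submodule.span ℝ (uu '' J)) : φ y = 0 := by
    rw [h.image_eq_basisOmit_image fun hjJ => hj (Finset.mem_insert_of_mem hjJ)] at hy
    exact Finsupp.notMem_support_iff.1 fun hm => hiJ ((h.basisOmit j).mem_span_image.1 hy hm)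
  have hdecomp (y : V n) (hy : y ∈ coneSpan (sigmaCone uu (insert (j.succAbove m) J))) :
      y - φ y • uu (j.succAbove m) ∈ Submodule.span ℝ (uu '' J) := by
    rw [coneSpan_sigmaCone, Finset.coe_insert, Set.image_insert_eq] at hy
    obtain ⟨a, z, hz, rfl⟩ := Submodule.mem_span_insert.1 hy
    simpa [hφi, hφJ z hz] using hz
  obtain ⟨⟨huV, huL⟩, hgen, g, hgτ, hgσ, hgu⟩ := hu
  obtain ⟨z, hz⟩ := h.coord_basisOmit_int j m u huL
  have hu' := hdecomp u huV
  rw [hz] at hu'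
  obtain ⟨k, hk⟩ := hgen _ ⟨Submodule.subset_span (mem_sigmaCone (Finset.mem_insert_self _ J)),
    h.mem_latticePts _⟩
  have hkz : k * z = 1 := by
    have := hφJ _ (coneSpan_sigmaCone (uu := uu) J ▸ (AddSubgroup.mem_inf.1 hk).1)
    rw [map_sub, hφi, ← Int.cast_smul_eq_zsmul ℝ, map_smul, hz, smul_eq_mul] at this
    exact_mod_cast (sub_eq_zero.1 this).symm
  have hgu' : g u = z * g (uu (j.succAbove m)) := by
    have := hgτ _ ((coneSpan_sigmaCone J).symm ▸ hu')
    rw [map_sub, map_smul, smul_eq_mul] at this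
    linarith
  have hz0 : 0 ≤ z := by
    by_contra! hz0
    have := mul_nonpos_of_nonpos_of_nonneg (Int.cast_nonpos.2 hz0.le)
      (hgσ _ (mem_sigmaCone (Finset.mem_insert_self _ J)))
    linarith
  simpa [Int.eq_one_of_mul_eq_one_left hz0 hkz] using hu'

lemma rayMark_sigmaCone_singleton (i : Fin (n + 1)) : rayMark uu (sigmaCone uu {i}) = uu i := by
  rcases Nat.eq_zero_or_pos n with rfl | hn
  · exact Subsingleton.elim _ _
  · refine Function.Injective.extend_apply (fun i i' hii' => ?_) _ _ i
    exact Finset.mem_singleton.1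
      (h.mem_of_mem_sigmaCone hn (hii' ▸ mem_sigmaCone (Finset.mem_singleton_self i)))

section Skeleton

variable (k : ℕ) (hk : k ≤ n)
include hk

/-- The fan `L_k^n`, the `k`-skeleton of the fan of projective space. -/
noncomputable def skeletonFan : Fan n where
  cones := {σ | ∃ I : Finset (Fin (n + 1)), I.card ≤ k ∧ σ = sigmaCone uu I}
  finite := ((Set.toFinite {I : Finset (Fin (n + 1)) | I.card ≤ k}).image (sigmaCone uu)).subset
    fun _ ⟨I, hI, hσ⟩ => ⟨I, hI, hσ.symm⟩
  isCone := by
    rintro _ ⟨I, hI, rfl⟩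
    exact h.isCone_sigmaCone (ne_univ_of_card_le (hI.trans hk))
  faces_mem := by
    rintro _ ⟨I, hI, rfl⟩ τ hτ
    obtain ⟨J, hJI, rfl⟩ := exists_eq_sigmaCone_of_isFace hτ
    exact ⟨J, (Finset.card_le_card hJI).trans hI, rfl⟩
  inter_face := by
    rintro _ ⟨I, hI, rfl⟩ _ ⟨I', hI', rfl⟩
    have hIu := ne_univ_of_card_le (hI.trans hk)
    rw [h.sigmaCone_inter hIu (ne_univ_of_card_le (hI'.trans hk))]
    exact h.isFace_sigmaCone Finset.inter_subset_left hIu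

lemma mem_conesOfDim_skeletonFan {d : ℕ} {σ : Set (V n)} :
    σ ∈ (h.skeletonFan k hk).conesOfDim d ↔
      ∃ I : Finset (Fin (n + 1)), I.card = d ∧ d ≤ k ∧ σ = sigmaCone uu I := by
  constructor
  · rintro ⟨⟨I, hI, rfl⟩, hd⟩
    rw [h.coneDim_sigmaCone (ne_univ_of_card_le (hI.trans hk))] at hd
    exact ⟨I, hd, hd ▸ hI, rfl⟩
  · rintro ⟨I, rfl, hI, rfl⟩
    exact ⟨⟨I, hI, rfl⟩, h.coneDim_sigmaCone (ne_univ_of_card_le (hI.trans hk))⟩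

noncomputable def skeletonMarkedFan : MarkedFan n k where
  toFan := h.skeletonFan k hk
  pure := by
    rintro _ ⟨I, hI, rfl⟩
    obtain ⟨I', hII', hI'⟩ := Finset.exists_superset_card_eq hI (by simp; omega)
    exact ⟨sigmaCone uu I', (h.mem_conesOfDim_skeletonFan k hk).2 ⟨I', hI', le_rfl, rfl⟩,
      sigmaCone_mono hII'⟩
  simplicial := by
    rintro _ ⟨I, hI, rfl⟩
    exact h.isSimplicialCone_sigmaCone (ne_univ_of_card_le (hI.trans hk))
  mark := rayMark uu
  mark_mem := by
    intro σ hσ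
    obtain ⟨I, hI, hk1, rfl⟩ := (h.mem_conesOfDim_skeletonFan k hk).1 hσ
    obtain ⟨i, rfl⟩ := Finset.card_eq_one.1 hI
    rw [h.rayMark_sigmaCone_singleton]
    exact ⟨mem_sigmaCone (Finset.mem_singleton_self i), h.ne_zero (by omega) i, h.mem_latticePts i⟩

lemma weight_skeletonMarkedFan {σ : Set (V n)}
    (hσ : σ ∈ (h.skeletonMarkedFan k hk).conesOfDim k) :
    (h.skeletonMarkedFan k hk).weight σ = 1 := by
  obtain ⟨I, hIk, -, rfl⟩ := (h.mem_conesOfDim_skeletonFan k hk).1 hσ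
  have hIu := ne_univ_of_card_le (hIk.le.trans hk)
  rw [MarkedFan.weight, AddSubgroup.relIndex_eq_one, h.coneLattice_sigmaCone hIu]
  refine AddSubgroup.closure_mono ?_
  rintro _ ⟨i, hi, rfl⟩
  refine ⟨sigmaCone uu {i}, ⟨(h.mem_conesOfDim_skeletonFan k hk).2
      ⟨{i}, Finset.card_singleton i, ?_, rfl⟩,
    h.isFace_sigmaCone (Finset.singleton_subset_iff.2 hi) hIu⟩, h.rayMark_sigmaCone_singleton i⟩
  exact hIk ▸ Finset.card_pos.2 ⟨i, hi⟩

lemma eq_of_isRelMark {J : Finset (Fin (n + 1))} (hJ : J ≠ Finset.univ) {i : Fin (n + 1)}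
    {v : V n}
    (hv : (h.skeletonMarkedFan k hk).IsRelMark (sigmaCone uu (insert i J)) (sigmaCone uu J) v) :
    v = uu i := by
  obtain ⟨e, he, heσ, heτ, rfl⟩ := hv
  obtain ⟨I, hI, hk1, rfl⟩ := (h.mem_conesOfDim_skeletonFan k hk).1 he
  obtain ⟨m, rfl⟩ := Finset.card_eq_one.1 hI
  have hm := h.mem_of_mem_sigmaCone (by omega)
    (heσ.2.2.1 (mem_sigmaCone (Finset.mem_singleton_self m)))
  have hmJ : m ∉ J := fun hmJ => heτ (h.isFace_sigmaCone (Finset.singleton_subset_iff.2 hmJ) hJ)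
  obtain rfl := (Finset.mem_insert.1 hm).resolve_right hmJ
  exact h.rayMark_sigmaCone_singleton m

lemma facetsOver_skeletonFan (hk1 : 1 ≤ k) {J : Finset (Fin (n + 1))} (hJ : J.card = k - 1) :
    (h.skeletonFan k hk).facetsOver k (sigmaCone uu J) =
      (fun i => sigmaCone uu (insert i J)) '' ↑Jᶜ := by
  classical
  ext σ
  constructor
  · rintro ⟨hσ, hJσ, -⟩
    obtain ⟨I, hI, -, rfl⟩ := (h.mem_conesOfDim_skeletonFan k hk).1 hσ
    have hJI : J ⊆ I := fun j hj => h.mem_of_mem_sigmaCone (by omega) (hJσ.2.2.1 (mem_sigmaCone hj))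
    obtain ⟨i, hi, rfl⟩ := Finset.exists_eq_insert_iff.2 ⟨hJI, by omega⟩
    exact ⟨i, by simpa using hi, rfl⟩
  · rintro ⟨i, hi, rfl⟩
    rw [Finset.coe_compl, Set.mem_compl_iff, Finset.mem_coe] at hi
    have hcard : (insert i J).card = k := by rw [Finset.card_insert_of_notMem hi]; omega
    refine ⟨(h.mem_conesOfDim_skeletonFan k hk).2 ⟨_, hcard, le_rfl, rfl⟩,
      h.isFace_sigmaCone (Finset.subset_insert i J) (ne_univ_of_card_le (hcard ▸ hk)),
      fun hJi => ?_⟩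
    exact hi (h.mem_of_mem_sigmaCone (by omega) (hJi ▸ mem_sigmaCone (Finset.mem_insert_self i J)))

/-- Modulo `V_τ`, a family `F` with `F σ_{J ∪ {i}} ≡ uu i` sums to `∑ i ∉ J, uu i = -∑ i ∈ J, uu i`,
which lies in `V_τ`. -/
lemma finsum_facetsOver_mem_coneSpan {J : Finset (Fin (n + 1))} (hJ : J.card = k - 1)
    (F : Set (V n) → V n)
    (hF : ∀ i ∉ J, insert i J ≠ Finset.univ →
      sigmaCone uu (insert i J) ∈ (h.skeletonFan k hk).facetsOver k (sigmaCone uu J) →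
      F (sigmaCone uu (insert i J)) - uu i ∈ Submodule.span ℝ (uu '' J)) :
    (∑ᶠ σ ∈ (h.skeletonFan k hk).facetsOver k (sigmaCone uu J), F σ) ∈
      coneSpan (sigmaCone uu J) := by
  classical
  rcases Nat.eq_zero_or_pos k with rfl | hk1
  · have hempty : (h.skeletonFan 0 hk).facetsOver 0 (sigmaCone uu J) = ∅ := by
      refine Set.eq_empty_of_forall_notMem fun σ hσ => hσ.2.2 ?_
      obtain ⟨I, hI, -, rfl⟩ := (h.mem_conesOfDim_skeletonFan 0 hk).1 hσ.1
      rw [Finset.card_eq_zero.1 hI, Finset.card_eq_zero.1 hJ]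
    rw [hempty, finsum_mem_empty]
    exact zero_mem _
  have hinj : Set.InjOn (fun i => sigmaCone uu (insert i J)) ↑Jᶜ := fun i hi i' _ hii' => by
    dsimp only at hii'
    have := h.mem_of_mem_sigmaCone (by omega)
      (hii' ▸ mem_sigmaCone (Finset.mem_insert_self i J))
    exact (Finset.mem_insert.1 this).resolve_right (Finset.mem_compl.1 hi)
  have hcompl : ∑ i ∈ Jᶜ, uu i = -∑ i ∈ J, uu i :=
    eq_neg_of_add_eq_zero_left (by rw [Finset.sum_compl_add_sum, h.sum_eq_zero])
  rw [coneSpan_sigmaCone, h.facetsOver_skeletonFan k hk hk1 hJ, finsum_mem_image hinj,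
    finsum_mem_coe_finset, ← sub_add_cancel (∑ i ∈ Jᶜ, _) (∑ i ∈ Jᶜ, uu i),
    ← Finset.sum_sub_distrib, hcompl]
  refine add_mem (Submodule.sum_mem _ fun i hi => ?_)
    (neg_mem (Submodule.sum_mem _ fun i hi => Submodule.subset_span ⟨i, hi, rfl⟩))
  have hiJ := Finset.mem_compl.1 hi
  refine hF i hiJ (ne_univ_of_card_le (by rw [Finset.card_insert_of_notMem hiJ]; omega)) ?_
  rw [h.facetsOver_skeletonFan k hk hk1 hJ]
  exact ⟨i, by simpa using hiJ, rfl⟩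

end Skeleton

end IsUnimodularCircuit

/-- Let `u_1, …, u_n` be a basis of the lattice `ℤ^n` and
`u_0 := −u_1 − ⋯ − u_n`. For `I ⊊ {0, …, n}` let `σ_I` be the simplicial cone in
`ℝ^n` spanned by `{u_i : i ∈ I}`, and for `0 ≤ k ≤ n` let `L_k^n := {σ_I : |I| ≤ k}`.
Then `L_k^n` is a simplicial fan of pure dimension `k` in `ℝ^n`, and with the
markings `v_{σ_{{i}}} := u_i` (hence all weights equal to `1`) it is a tropical
fan, i.e. for every `τ ∈ (L_k^n)^{(k−1)}` the balancing condition
`Σ_{σ > τ} v_{σ/τ} = 0` holds in `ℝ^n/V_τ`.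

Here `uu : Fin (n+1) → ℝ^n` lists `u_0, u_1, …, u_n` (so that `uu i.succ = u_i`
for `i = 1, …, n` form a lattice basis, and `∑ i, uu i = 0`, i.e.
`uu 0 = −u_1 − ⋯ − u_n`). -/
theorem stmt_5 (n k : ℕ) (hk : k ≤ n) (uu : Fin (n + 1) → V n)
    (hbasis : AddSubgroup.closure (Set.range fun i : Fin n => uu i.succ) = latticePts n)
    (hsum : ∑ i, uu i = 0) :
    ∃ X : MarkedFan n k,
      -- the cones of the fan are exactly the cones `σ_I` for `|I| ≤ k`:
      X.toFan.cones = {σ | ∃ I : Finset (Fin (n + 1)), I.card ≤ k ∧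
        σ = {x | ∃ c : Fin (n + 1) → ℝ, (∀ i, 0 ≤ c i) ∧ (∀ i ∉ I, c i = 0) ∧
              x = ∑ i, c i • uu i}} ∧
      -- the markings of the edges are the vectors `u_i`:
      (∀ i : Fin (n + 1), X.mark {x | ∃ c : ℝ, 0 ≤ c ∧ x = c • uu i} = uu i) ∧
      -- all weights are `1`:
      (∀ σ ∈ X.toFan.conesOfDim k, X.weight σ = 1) ∧
      -- `L_k^n` is a tropical fan:
      IsBalanced X.toFan k (fun σ => (X.weight σ : ℤ)) ∧
      -- the balancing condition in terms of the markings: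
      (∀ τ ∈ X.toFan.conesOfDim (k - 1),
        ∀ v : Set (V n) → V n,
          (∀ σ ∈ X.toFan.conesOfDim k, IsFace τ σ → τ ≠ σ → X.IsRelMark σ τ (v σ)) →
          (∑ᶠ σ ∈ {σ | σ ∈ X.toFan.conesOfDim k ∧ IsFace τ σ ∧ τ ≠ σ}, v σ) ∈ coneSpan τ) := by
  have h : IsUnimodularCircuit uu := ⟨hbasis, hsum⟩
  refine ⟨h.skeletonMarkedFan k hk, rfl, fun i => ?_,
    fun σ hσ => h.weight_skeletonMarkedFan k hk hσ, ?_, ?_⟩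
  · rw [← sigmaCone_singleton]
    exact h.rayMark_sigmaCone_singleton i
  · intro τ hτ u hu
    obtain ⟨J, hJ, -, rfl⟩ := (h.mem_conesOfDim_skeletonFan k hk).1 hτ
    refine h.finsum_facetsOver_mem_coneSpan k hk hJ _ fun i hi hiu hσ => ?_
    dsimp only
    rw [h.weight_skeletonMarkedFan k hk hσ.1, Nat.cast_one, one_smul]
    exact h.sub_mem_span_of_isNormalVector hi hiu (hu _ hσ.1 hσ.2.1 hσ.2.2)
  · intro τ hτ v hv
    obtain ⟨J, hJ, -, rfl⟩ := (h.mem_conesOfDim_skeletonFan k hk).1 hτ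
    refine h.finsum_facetsOver_mem_coneSpan k hk hJ _ fun i hi _ hσ => ?_
    rw [h.eq_of_isRelMark k hk (fun hJu => hi (by simp [hJu])) (hv _ hσ.1 hσ.2.1 hσ.2.2), sub_self]
    exact zero_mem _

end TropFan
end

section
/- Let Γ be a finite tree with leaves labeled x_1, …, x_N, with a positive length l(E) assigned to each edge E, and let v_1, …, v_N ∈ ℤ^r with Σ_k v_k = 0. Let d be the unique balanced direction assignment on the oriented edges of Γ with the edge at leaf x_k oriented towards x_k having direction v_k, and let h be a map from the vertices of Γ to ℝ^r such that h(W) − h(V) = l(E)·d(E oriented from V to W) for every edge E with endpoints V, W. Fix i ∈ {2, …, N} and assume v_1 = v_i = 0. Then h(x_1-vertex) and h(x_i-vertex) satisfy h(x_i) = h(x_1) + (1/2)·Σ_{k=2, k≠i}^{N} (dist(x_1, x_k) − dist(x_i, x_k))·v_k, where dist(x_a, x_b) denotes the sum of the lengths of the edges on the unique path in Γ between the leaves x_a and x_b. -/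
/-!
Let `Δf(u) = Σ_{w ~ u} (f w - f u) / l(u, w)` be the edge-length-weighted Laplacian of the tree;
it is self-adjoint, `Σ_u φ(u) Δh(u) = Σ_u Δφ(u) h(u)`. Since `h` has slopes `d`, `Δh(u)` is the
divergence of `d` at `u`, which vanishes at internal vertices by the balancing condition and
equals `-v_k` at the leaf `x_k`. For `φ = dist(x_1, ·) - dist(x_i, ·)` one gets
`Δφ = 2δ_{x_1} - 2δ_{x_i}`, because `dist(s, ·)` drops by `l` along the edge from `u` towards `s`
and grows by `l` along every other edge at `u`. Pairing gives
`-Σ_k φ(x_k) v_k = 2 h(x_1) - 2 h(x_i)`, and `φ(x_k) = dist(x_1, x_k) - dist(x_i, x_k)`.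
-/

open Finset

namespace SimpleGraph

section WeightedLaplacian

variable {V E : Type*} [Fintype V] (G : SimpleGraph V) [DecidableRel G.Adj]
  [AddCommGroup E] [Module ℝ E]

def weightedLaplacian (κ : V → V → ℝ) (g : V → E) (u : V) : E :=
  ∑ w ∈ G.neighborFinset u, κ u w • (g w - g u)

lemma sum_sum_neighborFinset_comm {M : Type*} [AddCommMonoid M] (F : V → V → M) :
    ∑ u, ∑ w ∈ G.neighborFinset u, F u w = ∑ u, ∑ w ∈ G.neighborFinset u, F w u := by
  simp_rw [neighborFinset_eq_filter, sum_filter]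
  rw [sum_comm]
  simp_rw [G.adj_comm]

theorem sum_smul_weightedLaplacian {κ : V → V → ℝ} (hκ : ∀ u w, G.Adj u w → κ u w = κ w u)
    (f : V → ℝ) (g : V → E) :
    ∑ u, f u • G.weightedLaplacian κ g u = ∑ u, G.weightedLaplacian κ f u • g u := by
  have hswap : ∑ u, ∑ w ∈ G.neighborFinset u, (f u * κ u w) • g w
      = ∑ u, ∑ w ∈ G.neighborFinset u, (κ u w * f w) • g u := by
    rw [sum_sum_neighborFinset_comm]
    refine sum_congr rfl fun u _ => sum_congr rfl fun w hw => ?_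
    rw [hκ w u ((mem_neighborFinset G u w).mp hw).symm, mul_comm]
  simp only [weightedLaplacian, smul_sum, sum_smul, smul_sub, sub_smul, smul_smul, smul_eq_mul,
    mul_sub, sum_sub_distrib]
  rw [hswap]
  simp only [mul_comm (f _)]

lemma weightedLaplacian_sub (κ : V → V → ℝ) (f g : V → E) (u : V) :
    G.weightedLaplacian κ (f - g) u = G.weightedLaplacian κ f u - G.weightedLaplacian κ g u := by
  simp only [weightedLaplacian, ← sum_sub_distrib, ← smul_sub, Pi.sub_apply]
  exact sum_congr rfl fun w _ => by abel_nf

lemma weightedLaplacian_inv_of_sub_eq_smul {l : V → V → ℝ} (hl0 : ∀ u w, G.Adj u w → l u w ≠ 0)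
    {g : V → E} {c : V → V → E} (hg : ∀ u w, G.Adj u w → g w - g u = l u w • c u w) (u : V) :
    G.weightedLaplacian (fun u w => (l u w)⁻¹) g u = ∑ w ∈ G.neighborFinset u, c u w := by
  refine sum_congr rfl fun w hw => ?_
  have hadj := (G.mem_neighborFinset u w).mp hw
  rw [hg u w hadj, smul_smul, inv_mul_cancel₀ (hl0 u w hadj), one_smul]

end WeightedLaplacian

variable {V : Type*} {G : SimpleGraph V}

namespace IsTree

variable (hT : G.IsTree)

noncomputable def path (s u : V) : G.Walk s u := (hT.existsUnique_path s u).choose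

lemma isPath_path (s u : V) : (hT.path s u).IsPath := (hT.existsUnique_path s u).choose_spec.1

lemma eq_path {s u : V} {p : G.Walk s u} (hp : p.IsPath) : p = hT.path s u :=
  (hT.existsUnique_path s u).choose_spec.2 p hp

lemma path_self (s : V) : hT.path s s = .nil := (hT.eq_path .nil).symm

lemma mem_support_path_iff {s u w : V} (hadj : G.Adj u w) :
    w ∈ (hT.path s u).support ↔ u ≠ s ∧ w = (hT.path s u).penultimate := by
  constructor
  · intro hw
    refine ⟨?_, hT.isAcyclic.eq_penultimate_of_adj_end (hT.isPath_path s u) hadj hw⟩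
    rintro rfl
    simp only [path_self, Walk.support_nil, List.mem_singleton] at hw
    exact hadj.ne hw.symm
  · rintro ⟨-, rfl⟩
    exact Walk.getVert_mem_support _ _

lemma path_eq_concat_of_mem_support {s u w : V} (hadj : G.Adj u w)
    (hw : w ∈ (hT.path s u).support) : hT.path s u = (hT.path s w).concat hadj.symm :=
  hT.isAcyclic.path_concat (hT.isPath_path s w) (hT.isPath_path s u) hadj.symm hw

lemma path_eq_concat_of_notMem_support {s u w : V} (hadj : G.Adj u w)
    (hw : w ∉ (hT.path s u).support) : hT.path s w = (hT.path s u).concat hadj :=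
  hT.isAcyclic.path_concat (hT.isPath_path s u) (hT.isPath_path s w) hadj <|
    hT.isAcyclic.mem_support_of_ne_mem_support_of_adj_of_isPath (hT.isPath_path s w)
      (hT.isPath_path s u) hadj.symm hw

noncomputable def weightedDist (l : V → V → ℝ) (s u : V) : ℝ :=
  ((hT.path s u).darts.map fun e => l e.fst e.snd).sum

lemma weightedDist_eq_of_mem_support (l : V → V → ℝ) {s u w : V} (hadj : G.Adj u w)
    (hw : w ∈ (hT.path s u).support) :
    hT.weightedDist l s u = hT.weightedDist l s w + l w u := by
  rw [weightedDist, hT.path_eq_concat_of_mem_support hadj hw, Walk.darts_concat]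
  simp [weightedDist]

lemma weightedDist_eq_of_notMem_support (l : V → V → ℝ) {s u w : V} (hadj : G.Adj u w)
    (hw : w ∉ (hT.path s u).support) :
    hT.weightedDist l s w = hT.weightedDist l s u + l u w := by
  rw [weightedDist, hT.path_eq_concat_of_notMem_support hadj hw, Walk.darts_concat]
  simp [weightedDist]

lemma weightedDist_eq_sum_edges {l : V → V → ℝ} (hl : ∀ u w, l u w = l w u) {s u : V}
    {p : G.Walk s u} (hp : p.IsPath) :
    hT.weightedDist l s u = (p.edges.map (Sym2.lift ⟨l, hl⟩)).sum := by
  rw [weightedDist, ← hT.eq_path hp, Walk.edges, List.map_map]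
  rfl

lemma weightedLaplacian_weightedDist [Fintype V] [DecidableEq V] [DecidableRel G.Adj]
    {l : V → V → ℝ} (hl : ∀ u w, l u w = l w u) (hl0 : ∀ u w, G.Adj u w → l u w ≠ 0) (s u : V) :
    G.weightedLaplacian (fun u w => (l u w)⁻¹) (hT.weightedDist l s) u
      = G.degree u - if u = s then 0 else 2 := by
  have hterm : ∀ w ∈ G.neighborFinset u,
      (l u w)⁻¹ • (hT.weightedDist l s w - hT.weightedDist l s u)
        = 1 - 2 * if w ∈ (hT.path s u).support then 1 else 0 := by
    intro w hw
    have hadj := (G.mem_neighborFinset u w).mp hw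
    have := hl0 u w hadj
    by_cases hmem : w ∈ (hT.path s u).support
    · rw [hT.weightedDist_eq_of_mem_support l hadj hmem, hl w u, if_pos hmem, smul_eq_mul]
      field_simp
      ring
    · rw [hT.weightedDist_eq_of_notMem_support l hadj hmem, if_neg hmem, smul_eq_mul]
      field_simp
      ring
  have hparent : #{w ∈ G.neighborFinset u | w ∈ (hT.path s u).support}
      = if u = s then 0 else 1 := by
    split_ifs with hus
    · rw [card_eq_zero, filter_eq_empty_iff]
      exact fun w hw hmem => ((hT.mem_support_path_iff ((G.mem_neighborFinset u w).mp hw)).mp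
        hmem).1 hus
    · rw [card_eq_one]
      refine ⟨(hT.path s u).penultimate, ?_⟩
      ext w
      simp only [mem_filter, mem_neighborFinset, mem_singleton]
      constructor
      · rintro ⟨hadj, hmem⟩
        exact ((hT.mem_support_path_iff hadj).mp hmem).2
      · rintro rfl
        have hadj : G.Adj u (hT.path s u).penultimate :=
          (Walk.adj_penultimate (Walk.not_nil_of_ne (Ne.symm hus))).symm
        exact ⟨hadj, (hT.mem_support_path_iff hadj).mpr ⟨hus, rfl⟩⟩
  rw [weightedLaplacian, sum_congr rfl hterm, sum_sub_distrib, ← mul_sum, sum_boole, hparent,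
    sum_const, card_neighborFinset_eq_degree]
  split_ifs <;> simp

lemma weightedLaplacian_sub_weightedDist [Fintype V] [DecidableEq V] [DecidableRel G.Adj]
    {l : V → V → ℝ} (hl : ∀ u w, l u w = l w u) (hl0 : ∀ u w, G.Adj u w → l u w ≠ 0) (s t u : V) :
    G.weightedLaplacian (fun u w => (l u w)⁻¹) (hT.weightedDist l s - hT.weightedDist l t) u
      = (if u = s then 2 else 0) - if u = t then 2 else 0 := by
  rw [weightedLaplacian_sub, hT.weightedLaplacian_weightedDist hl hl0,
    hT.weightedLaplacian_weightedDist hl hl0]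
  split_ifs <;> simp_all

end IsTree

section BalancedAssignment

variable {V ι M : Type*} [Fintype V] (G : SimpleGraph V) [DecidableRel G.Adj] [AddCommGroup M]

structure IsBalancedAssignment (x : ι → V) (v : ι → M) (c : V → V → M) : Prop where
  antisymm : ∀ u w, G.Adj u w → c u w = -c w u
  leaf : ∀ k u, G.Adj u (x k) → c u (x k) = v k
  balanced : ∀ u, 2 ≤ G.degree u → ∑ w ∈ G.neighborFinset u, c u w = 0

namespace IsBalancedAssignment

variable {G} {x : ι → V} {v : ι → M} {c : V → V → M}

lemma map {N : Type*} [AddCommGroup N] (hc : G.IsBalancedAssignment x v c) (f : M →+ N) :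
    G.IsBalancedAssignment x (fun k => f (v k)) (fun u w => f (c u w)) where
  antisymm u w hadj := by rw [hc.antisymm u w hadj, map_neg]
  leaf k u hadj := by rw [hc.leaf k u hadj]
  balanced u hdeg := by rw [← map_sum, hc.balanced u hdeg, map_zero]

lemma sum_neighborFinset_of_degree_eq_one (hc : G.IsBalancedAssignment x v c) {k : ι}
    (hk : G.degree (x k) = 1) :
    ∑ w ∈ G.neighborFinset (x k), c (x k) w = -v k := by
  obtain ⟨w, hw⟩ := card_eq_one.mp ((G.card_neighborFinset_eq_degree _).trans hk)
  have hadj : G.Adj (x k) w := (G.mem_neighborFinset _ _).mp (hw ▸ mem_singleton_self w)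
  rw [hw, sum_singleton, hc.antisymm _ _ hadj, hc.leaf k w hadj.symm]

lemma sum_neighborFinset_eq_zero_of_degree_ne_one (hc : G.IsBalancedAssignment x v c) {u : V}
    (hu : G.degree u ≠ 1) :
    ∑ w ∈ G.neighborFinset u, c u w = 0 := by
  rcases Nat.lt_or_ge (G.degree u) 2 with hdeg | hdeg
  · rw [card_eq_zero.mp ((G.card_neighborFinset_eq_degree u).trans (by omega)), sum_empty]
  · exact hc.balanced u hdeg

lemma sum_smul_sum_neighborFinset [Fintype ι] [Module ℝ M]
    (hc : G.IsBalancedAssignment x v c) (hxinj : Function.Injective x)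
    (hleaf : ∀ k, G.degree (x k) = 1) (hallleaves : ∀ u, G.degree u = 1 → ∃ k, u = x k)
    (f : V → ℝ) :
    ∑ u, f u • ∑ w ∈ G.neighborFinset u, c u w = -∑ k, f (x k) • v k := by
  classical
  have hinner : ∀ u ∈ univ, u ∉ univ.image x → f u • ∑ w ∈ G.neighborFinset u, c u w = 0 := by
    intro u _ hu
    refine smul_eq_zero_of_right _
      (hc.sum_neighborFinset_eq_zero_of_degree_ne_one fun hdeg => hu ?_)
    obtain ⟨k, rfl⟩ := hallleaves u hdeg
    exact mem_image_of_mem x (mem_univ k)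
  rw [← sum_subset (subset_univ _) hinner, sum_image hxinj.injOn, ← sum_neg_distrib]
  exact sum_congr rfl fun k _ => by
    rw [hc.sum_neighborFinset_of_degree_eq_one (hleaf k), smul_neg]

end IsBalancedAssignment

end BalancedAssignment

end SimpleGraph

open SimpleGraph

theorem stmt_18_general {V : Type*} [Fintype V] (G : SimpleGraph V) [DecidableRel G.Adj]
    (hT : G.IsTree)
    (r N : ℕ) [NeZero N]
    -- the leaves of `Γ` are `x 0, …, x (N-1)`:
    (x : Fin N → V) (hxinj : Function.Injective x)
    (hleaf : ∀ k, G.degree (x k) = 1)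
    (hallleaves : ∀ u : V, G.degree u = 1 → ∃ k, u = x k)
    -- the edge lengths:
    (l : V → V → ℝ) (hlsymm : ∀ u w, l u w = l w u)
    (hlpos : ∀ u w, G.Adj u w → 0 < l u w)
    -- the directions of the ends:
    (vK : Fin N → Fin r → ℤ)
    -- `d` is the balanced direction assignment (`d u w` is the direction of the
    -- edge `{u, w}` oriented from `u` to `w`):
    (d : V → V → Fin r → ℤ)
    (hdanti : ∀ u w : V, G.Adj u w → d u w = - d w u)
    (hdleaf : ∀ (k : Fin N) (u : V), G.Adj u (x k) → d u (x k) = vK k)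
    (hdbal : ∀ u : V, 2 ≤ G.degree u → ∑ w ∈ G.neighborFinset u, d u w = 0)
    -- `h` maps the tree to `ℝ^r` with the prescribed edge directions and lengths:
    (h : V → Fin r → ℝ)
    (hh : ∀ u w : V, G.Adj u w → h w - h u = l u w • fun j => (d u w j : ℝ))
    -- `dist a b` is the sum of the edge lengths on the path from `x a` to `x b`:
    (dist : Fin N → Fin N → ℝ)
    (hdist : ∀ (a b : Fin N) (p : G.Walk (x a) (x b)), p.IsPath →
      dist a b = (p.edges.map (Sym2.lift ⟨l, hlsymm⟩)).sum)
    -- the marked ends `x 0` and `x i` are contracted: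
    (i : Fin N) (hv1 : vK 0 = 0) (hvi : vK i = 0) :
    h (x i) = h (x 0) + (1 / 2 : ℝ) •
      ∑ k ∈ (Finset.univ.erase 0).erase i,
        (dist 0 k - dist i k) • fun j => (vK k j : ℝ) := by
  classical
  have hl0 : ∀ u w, G.Adj u w → l u w ≠ 0 := fun u w hadj => (hlpos u w hadj).ne'
  let castVec : (Fin r → ℤ) →+ (Fin r → ℝ) := (Int.castAddHom ℝ).compLeft (Fin r)
  have hbal := (IsBalancedAssignment.mk hdanti hdleaf hdbal).map castVec
  set φ : V → ℝ := hT.weightedDist l (x 0) - hT.weightedDist l (x i)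
  have hφ : ∀ k, φ (x k) = dist 0 k - dist i k := fun k => by
    rw [show φ (x k) = _ - _ from rfl, hdist 0 k _ (hT.isPath_path _ _),
      hdist i k _ (hT.isPath_path _ _), hT.weightedDist_eq_sum_edges hlsymm (hT.isPath_path _ _),
      hT.weightedDist_eq_sum_edges hlsymm (hT.isPath_path _ _)]
  have hLh : ∀ u, G.weightedLaplacian (fun u w => (l u w)⁻¹) h u
      = ∑ w ∈ G.neighborFinset u, castVec (d u w) :=
    G.weightedLaplacian_inv_of_sub_eq_smul hl0 hh
  have hgreen := G.sum_smul_weightedLaplacian (fun u w _ => congrArg Inv.inv (hlsymm u w)) φ h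
  have hLφ : ∀ u, G.weightedLaplacian (fun u w => (l u w)⁻¹) φ u
      = (if u = x 0 then 2 else 0) - if u = x i then 2 else 0 :=
    hT.weightedLaplacian_sub_weightedDist hlsymm hl0 _ _
  simp only [hLh, hLφ, hbal.sum_smul_sum_neighborFinset hxinj hleaf hallleaves, sub_smul, ite_smul,
    zero_smul, sum_sub_distrib, sum_ite_eq', mem_univ, if_true] at hgreen
  have herase : ∑ k ∈ (univ.erase 0).erase i, (dist 0 k - dist i k) • (fun j => (vK k j : ℝ))
      = ∑ k, φ (x k) • castVec (vK k) := by
    rw [sum_erase _ (by simp [hvi, funext_iff]), sum_erase _ (by simp [hv1, funext_iff])]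
    exact sum_congr rfl fun k _ => by rw [hφ]; rfl
  rw [herase]
  linear_combination (norm := module) (1 / 2 : ℝ) • hgreen

/-- Let `Γ` be a finite tree with leaves labeled
`x_1, …, x_N`, with a positive length `l(E)` assigned to each edge `E`, and let
`v_1, …, v_N ∈ ℤ^r` with `Σ_k v_k = 0`. Let `d` be the unique balanced direction
assignment on the oriented edges of `Γ` with the edge at leaf `x_k` oriented
towards `x_k` having direction `v_k`, and let `h` be a map from the vertices of
`Γ` to `ℝ^r` such that `h(W) − h(V) = l(E)·d(E oriented from V to W)` for every
edge `E` with endpoints `V, W`. Fix `i ∈ {2, …, N}` and assume `v_1 = v_i = 0`.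
Then `h(x_i) = h(x_1) + (1/2)·Σ_{k=2, k≠i}^{N} (dist(x_1, x_k) − dist(x_i, x_k))·v_k`,
where `dist(x_a, x_b)` denotes the sum of the lengths of the edges on the unique
path in `Γ` between the leaves `x_a` and `x_b`.

(Here the label `1` of the paper is the index `0 : Fin N`.) -/
theorem stmt_18 {V : Type*} [Fintype V] (G : SimpleGraph V) [DecidableRel G.Adj]
    (hT : G.IsTree)
    (r N : ℕ) [NeZero N]
    -- the leaves of `Γ` are `x 0, …, x (N-1)`:
    (x : Fin N → V) (hxinj : Function.Injective x)
    (hleaf : ∀ k, G.degree (x k) = 1)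
    (hallleaves : ∀ u : V, G.degree u = 1 → ∃ k, u = x k)
    -- the edge lengths:
    (l : V → V → ℝ) (hlsymm : ∀ u w, l u w = l w u)
    (hlpos : ∀ u w, G.Adj u w → 0 < l u w)
    -- the directions of the ends:
    (vK : Fin N → Fin r → ℤ) (hvsum : ∑ k, vK k = 0)
    -- `d` is the balanced direction assignment (`d u w` is the direction of the
    -- edge `{u, w}` oriented from `u` to `w`):
    (d : V → V → Fin r → ℤ)
    (hd0 : ∀ u w : V, ¬ G.Adj u w → d u w = 0)
    (hdanti : ∀ u w : V, G.Adj u w → d u w = - d w u)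
    (hdleaf : ∀ (k : Fin N) (u : V), G.Adj u (x k) → d u (x k) = vK k)
    (hdbal : ∀ u : V, 2 ≤ G.degree u → ∑ w ∈ G.neighborFinset u, d u w = 0)
    -- `h` maps the tree to `ℝ^r` with the prescribed edge directions and lengths:
    (h : V → Fin r → ℝ)
    (hh : ∀ u w : V, G.Adj u w → h w - h u = l u w • fun j => (d u w j : ℝ))
    -- `dist a b` is the sum of the edge lengths on the path from `x a` to `x b`:
    (dist : Fin N → Fin N → ℝ)
    (hdist : ∀ (a b : Fin N) (p : G.Walk (x a) (x b)), p.IsPath →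
      dist a b = (p.edges.map (Sym2.lift ⟨l, hlsymm⟩)).sum)
    -- the marked ends `x 0` and `x i` are contracted:
    (i : Fin N) (hi : i ≠ 0) (hv1 : vK 0 = 0) (hvi : vK i = 0) :
    h (x i) = h (x 0) + (1 / 2 : ℝ) •
      ∑ k ∈ (Finset.univ.erase 0).erase i,
        (dist 0 k - dist i k) • fun j => (vK k j : ℝ) :=
  stmt_18_general G hT r N x hxinj hleaf hallleaves l hlsymm hlpos vK d hdanti hdleaf hdbal h hh
    dist hdist i hv1 hvi
end
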